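/- arXiv:0904.2342 — 12 statements merged into one kernel-verified Lean document; each statement's English description precedes it below -/
import Mathlib

section
/- Let X be a real Banach space, let a ≤ b be reals, and let y : [a,b] → X be continuously differentiable. Suppose there are continuous functions γ : [a,b] → (−∞,1] and h : [a,b] → ℝ such that ‖y(t) + y'(t)‖ ≤ (1 − γ(t))‖y(t)‖ + h(t) for all t ∈ [a,b]. Then for all t ∈ [a,b], ‖y(t)‖ ≤ e^{−∫_a^t γ(s) ds} ( ‖y(a)‖ + ∫_a^t h(s) e^{∫_a^s γ(r) dr} ds ). -/
/-!
Convexity of the norm bounds the right Dini derivative of `‖y‖` by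
`‖y + y'‖ - ‖y‖ ≤ -γ ‖y‖ + h`. After multiplication by the integrating factor
`exp (∫_a^t γ)`, the function `exp (∫_a^t γ) ‖y t‖` has right Dini derivative at most
`h t exp (∫_a^t γ)`, and the one-sided comparison theorem bounds it by
`‖y a‖ + ∫_a^t h(s) exp (∫_a^s γ) ds`.
-/

open intervalIntegral Real Set Filter Topology

theorem slope_norm_le_norm_add_slope_sub_norm {E : Type*} [SeminormedAddCommGroup E]
    [NormedSpace ℝ E] (f : ℝ → E) {x z : ℝ} (hxz : x < z) (hz : z ≤ x + 1) :
    slope (fun t => ‖f t‖) x z ≤ ‖f x + slope f x z‖ - ‖f x‖ := by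
  have hs : 0 < z - x := sub_pos.2 hxz
  have hfz : f z = (1 - (z - x)) • f x + (z - x) • (f x + slope f x z) := by
    rw [smul_add, sub_smul_slope, vsub_eq_sub]; module
  have hconv : ‖f z‖ ≤ (1 - (z - x)) * ‖f x‖ + (z - x) * ‖f x + slope f x z‖ := by
    rw [hfz]
    exact (convexOn_norm convex_univ).2 (mem_univ _) (mem_univ _) (by linarith) hs.le (by ring)
  rw [slope_def_field, div_le_iff₀ hs]
  linarith

theorem HasDerivWithinAt.eventually_slope_norm_lt {E : Type*} [NormedAddCommGroup E]
    [NormedSpace ℝ E] {f : ℝ → E} {f' : E} {x r : ℝ} (hf : HasDerivWithinAt f f' (Ioi x) x)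
    (hr : ‖f x + f'‖ - ‖f x‖ < r) : ∀ᶠ z in 𝓝[>] x, slope (fun t => ‖f t‖) x z < r := by
  have hf' : Tendsto (slope f x) (𝓝[>] x) (𝓝 f') :=
    (hasDerivWithinAt_iff_tendsto_slope' (by simp)).1 hf
  have hslope : Tendsto (fun z => ‖f x + slope f x z‖ - ‖f x‖) (𝓝[>] x)
      (𝓝 (‖f x + f'‖ - ‖f x‖)) :=
    ((hf'.const_add (f x)).norm).sub_const _
  filter_upwards [hslope.eventually_lt_const hr, Ioc_mem_nhdsGT (lt_add_one x)]
    with z hz ⟨hxz, hz1⟩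
  exact (slope_norm_le_norm_add_slope_sub_norm f hxz hz1).trans_lt hz

section Primitive

variable {E : Type*} [NormedAddCommGroup E] [NormedSpace ℝ E] {f : ℝ → E} {a b : ℝ}

theorem ContinuousOn.continuousOn_primitive (hab : a ≤ b) (hf : ContinuousOn f (Icc a b)) :
    ContinuousOn (fun u => ∫ t in a..u, f t) (Icc a b) := by
  rw [← uIcc_of_le hab] at hf ⊢
  exact continuousOn_primitive_interval hf.integrableOn_uIcc

theorem ContinuousOn.hasDerivWithinAt_primitive_Ici [CompleteSpace E]
    (hf : ContinuousOn f (Icc a b)) {x : ℝ} (hx : x ∈ Ico a b) :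
    HasDerivWithinAt (fun u => ∫ t in a..u, f t) (f x) (Ici x) x := by
  have hxab : x ∈ Icc a b := Ico_subset_Icc_self hx
  have hnhds : Icc a b ∈ 𝓝[>] x := Icc_mem_nhdsGT_of_mem hx
  refine integral_hasDerivWithinAt_right ?_ ?_ ?_
  · exact (hf.mono (uIcc_subset_Icc (left_mem_Icc.2 (hxab.1.trans hxab.2)) hxab))
      |>.intervalIntegrable
  · exact (hf.stronglyMeasurableAtFilter_nhdsWithin measurableSet_Icc x).filter_mono
      (nhdsWithin_le_of_mem hnhds)
  · exact (hf x hxab).mono_of_mem_nhdsWithin hnhds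

end Primitive

-- `hu` encodes `liminf_{z → x⁺} slope u x z ≤ u'`, the form of Dini bound used by
-- `image_le_of_liminf_slope_right_le_deriv_boundary`.
theorem frequently_slope_mul_lt {u g : ℝ → ℝ} {u' g' x r : ℝ}
    (hu : ∀ r, u' < r → ∃ᶠ z in 𝓝[>] x, slope u x z < r)
    (hg : HasDerivWithinAt g g' (Ici x) x) (hgx : 0 < g x) (hr : g x * u' + g' * u x < r) :
    ∃ᶠ z in 𝓝[>] x, slope (fun t => g t * u t) x z < r := by
  have hslope_mul (z : ℝ) :
      slope (fun t => g t * u t) x z = g z * slope u x z + slope g x z * u x := by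
    simp only [slope_def_field]
    by_cases hz : z - x = 0
    · simp [hz]
    · field_simp; ring
  obtain ⟨r₀, hr₀, hu'r₀⟩ : ∃ r₀, g x * r₀ + g' * u x < r ∧ u' < r₀ := by
    have : ∀ᶠ s in 𝓝 u', g x * s + g' * u x < r :=
      ((continuous_const.mul continuous_id).add continuous_const).tendsto u'
        |>.eventually_lt_const hr
    exact ((this.filter_mono nhdsWithin_le_nhds).and self_mem_nhdsWithin).exists (f := 𝓝[>] u')
  have hg_slope : Tendsto (slope g x) (𝓝[>] x) (𝓝 g') :=
    (hasDerivWithinAt_iff_tendsto_slope' (by simp)).1 hg.Ioi_of_Ici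
  have hg_cont : Tendsto g (𝓝[>] x) (𝓝 (g x)) :=
    (hg.continuousWithinAt.mono Ioi_subset_Ici_self).tendsto
  have hlim : Tendsto (fun z => g z * r₀ + slope g x z * u x) (𝓝[>] x)
      (𝓝 (g x * r₀ + g' * u x)) :=
    (hg_cont.mul_const r₀).add (hg_slope.mul_const (u x))
  refine (hu r₀ hu'r₀).mp ?_
  filter_upwards [hlim.eventually_lt_const hr₀, hg_cont.eventually_const_lt hgx]
    with z hz hgz hzu
  rw [hslope_mul]
  nlinarith [mul_lt_mul_of_pos_left hzu hgz]

theorem le_exp_neg_integral_mul_of_liminf_slope_right_le {u γ h : ℝ → ℝ} {a b : ℝ}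
    (hab : a ≤ b) (hu : ContinuousOn u (Icc a b)) (hγ : ContinuousOn γ (Icc a b))
    (hh : ContinuousOn h (Icc a b))
    (bound : ∀ x ∈ Ico a b, ∀ r, -γ x * u x + h x < r → ∃ᶠ z in 𝓝[>] x, slope u x z < r) :
    ∀ t ∈ Icc a b, u t ≤ exp (-∫ s in a..t, γ s) *
      (u a + ∫ s in a..t, h s * exp (∫ r in a..s, γ r)) := by
  set G : ℝ → ℝ := fun t => ∫ s in a..t, γ s
  have hexpG : ContinuousOn (fun t => exp (G t)) (Icc a b) :=
    continuous_exp.comp_continuousOn (hγ.continuousOn_primitive hab)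
  have hexpG' (x : ℝ) (hx : x ∈ Ico a b) :
      HasDerivWithinAt (fun t => exp (G t)) (exp (G x) * γ x) (Ici x) x :=
    (hγ.hasDerivWithinAt_primitive_Ici hx).exp
  have hmain : ∀ t ∈ Icc a b, exp (G t) * u t ≤ u a + ∫ s in a..t, h s * exp (G s) := by
    refine image_le_of_liminf_slope_right_le_deriv_boundary (hexpG.mul hu) (by simp [G])
      (continuousOn_const.add ((hh.mul hexpG).continuousOn_primitive hab))
      (fun x hx => ((hh.mul hexpG).hasDerivWithinAt_primitive_Ici hx).const_add _)
      fun x hx r hr => frequently_slope_mul_lt (bound x hx) (hexpG' x hx) (exp_pos _) ?_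
    rw [Pi.mul_apply] at hr
    linarith
  intro t ht
  calc u t = exp (-G t) * (exp (G t) * u t) := by rw [← mul_assoc, ← exp_add]; simp
    _ ≤ exp (-G t) * (u a + ∫ s in a..t, h s * exp (G s)) :=
      mul_le_mul_of_nonneg_left (hmain t ht) (exp_pos _).le

theorem norm_le_gronwall_exp_general
    {X : Type*} [NormedAddCommGroup X] [NormedSpace ℝ X]
    (a b : ℝ) (hab : a ≤ b)
    (y y' : ℝ → X) (γ h : ℝ → ℝ)
    (hy : ∀ t ∈ Set.Icc a b, HasDerivAt y (y' t) t)
    (hγ : ContinuousOn γ (Set.Icc a b))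
    (hh : ContinuousOn h (Set.Icc a b))
    (hineq : ∀ t ∈ Set.Icc a b, ‖y t + y' t‖ ≤ (1 - γ t) * ‖y t‖ + h t) :
    ∀ t ∈ Set.Icc a b,
      ‖y t‖ ≤ Real.exp (-∫ s in a..t, γ s) *
        (‖y a‖ + ∫ s in a..t, h s * Real.exp (∫ r in a..s, γ r)) := by
  refine le_exp_neg_integral_mul_of_liminf_slope_right_le hab
    (fun t ht => (hy t ht).continuousAt.norm.continuousWithinAt) hγ hh fun x hx r hr => ?_
  have hx' : x ∈ Icc a b := Ico_subset_Icc_self hx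
  refine ((hy x hx').hasDerivWithinAt.eventually_slope_norm_lt ?_).frequently
  linarith [hineq x hx']

/-- Gronwall-type estimate: if `y : [a,b] → X` is continuously
differentiable with `‖y(t) + y'(t)‖ ≤ (1 - γ(t))‖y(t)‖ + h(t)` for continuous
`γ : [a,b] → (-∞,1]` and continuous `h`, then
`‖y(t)‖ ≤ e^{-∫_a^t γ}(‖y(a)‖ + ∫_a^t h(s) e^{∫_a^s γ} ds)`. -/
theorem norm_le_gronwall_exp
    {X : Type*} [NormedAddCommGroup X] [NormedSpace ℝ X] [CompleteSpace X]
    (a b : ℝ) (hab : a ≤ b)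
    (y y' : ℝ → X) (γ h : ℝ → ℝ)
    (hy : ∀ t ∈ Set.Icc a b, HasDerivAt y (y' t) t)
    (hy' : ContinuousOn y' (Set.Icc a b))
    (hγ : ContinuousOn γ (Set.Icc a b))
    (hγ1 : ∀ t ∈ Set.Icc a b, γ t ≤ 1)
    (hh : ContinuousOn h (Set.Icc a b))
    (hineq : ∀ t ∈ Set.Icc a b, ‖y t + y' t‖ ≤ (1 - γ t) * ‖y t‖ + h t) :
    ∀ t ∈ Set.Icc a b,
      ‖y t‖ ≤ Real.exp (-∫ s in a..t, γ s) *
        (‖y a‖ + ∫ s in a..t, h s * Real.exp (∫ r in a..s, γ r)) :=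
  norm_le_gronwall_exp_general a b hab y y' γ h hy hγ hh hineq
end

section
/- Let X be a real Banach space and J : X → X nonexpansive. If U, V : [0,∞) → X are differentiable and satisfy U'(t) = J(U(t)) − U(t) and V'(t) = J(V(t)) − V(t) for all t ≥ 0, then the function t ↦ ‖U(t) − V(t)‖ is non-increasing on [0,∞). -/
open Real Set

/-- Multiplying by `exp t` turns `‖W' + W‖ ≤ ‖W‖` into the Gronwall hypothesis
`‖(exp • W)'‖ ≤ ‖exp • W‖`, and Gronwall's factor `exp (t - a)` exactly cancels the weight. -/
theorem norm_le_norm_of_norm_deriv_add_self_le {E : Type*} [NormedAddCommGroup E]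
    [NormedSpace ℝ E] {W W' : ℝ → E} {a b : ℝ} (hW : ContinuousOn W (Icc a b))
    (hW' : ∀ t ∈ Ico a b, HasDerivWithinAt W (W' t) (Ici t) t)
    (hbound : ∀ t ∈ Ico a b, ‖W' t + W t‖ ≤ ‖W t‖) :
    ∀ t ∈ Icc a b, ‖W t‖ ≤ ‖W a‖ := by
  have norm_exp_smul (t : ℝ) (x : E) : ‖exp t • x‖ = exp t * ‖x‖ :=
    norm_smul_of_nonneg (exp_pos t).le x
  have hderiv : ∀ t ∈ Ico a b,
      HasDerivWithinAt (fun τ => exp τ • W τ) (exp t • (W' t + W t)) (Ici t) t := by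
    intro t ht
    convert (hasDerivAt_exp t).hasDerivWithinAt.smul (hW' t ht) using 1
    · rfl
    · rw [smul_add, add_comm]
  intro t ht
  have gronwall := norm_le_gronwallBound_of_norm_deriv_right_le
    (f := fun τ => exp τ • W τ) (K := 1) (ε := 0)
    (continuous_exp.continuousOn.smul hW) hderiv le_rfl
    (fun τ hτ => by
      rw [norm_exp_smul, norm_exp_smul, one_mul, add_zero]
      exact mul_le_mul_of_nonneg_left (hbound τ hτ) (exp_pos τ).le) t ht
  rw [gronwallBound_ε0, one_mul, norm_exp_smul, norm_exp_smul, mul_right_comm, ← exp_add,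
    add_sub_cancel] at gronwall
  exact le_of_mul_le_mul_left gronwall (exp_pos t)

theorem norm_sub_solutions_antitone_general
    {X : Type*} [NormedAddCommGroup X] [NormedSpace ℝ X]
    (J : X → X) (hJ : ∀ x y : X, ‖J x - J y‖ ≤ ‖x - y‖)
    (U V : ℝ → X)
    (hU : ∀ t ≥ (0 : ℝ), HasDerivAt U (J (U t) - U t) t)
    (hV : ∀ t ≥ (0 : ℝ), HasDerivAt V (J (V t) - V t) t) :
    AntitoneOn (fun t => ‖U t - V t‖) (Set.Ici (0 : ℝ)) := by
  intro s hs t _ hst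
  have hdiff : ∀ τ ∈ Icc s t,
      HasDerivAt (U - V) ((J (U τ) - U τ) - (J (V τ) - V τ)) τ := fun τ hτ =>
    (hU τ (le_trans hs hτ.1)).sub (hV τ (le_trans hs hτ.1))
  refine norm_le_norm_of_norm_deriv_add_self_le (W := U - V)
    (fun τ hτ => (hdiff τ hτ).continuousAt.continuousWithinAt)
    (fun τ hτ => (hdiff τ (Ico_subset_Icc_self hτ)).hasDerivWithinAt)
    (fun τ _ => ?_) t ⟨hst, le_rfl⟩
  calc ‖(J (U τ) - U τ) - (J (V τ) - V τ) + (U - V) τ‖ = ‖J (U τ) - J (V τ)‖ := by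
        simp only [Pi.sub_apply]; congr 1; abel
    _ ≤ ‖(U - V) τ‖ := hJ _ _

/-- if `U` and `V` both solve `U'(t) = J(U(t)) - U(t)` on `[0,∞)`
for a nonexpansive `J`, then `t ↦ ‖U(t) - V(t)‖` is non-increasing on `[0,∞)`. -/
theorem norm_sub_solutions_antitone
    {X : Type*} [NormedAddCommGroup X] [NormedSpace ℝ X] [CompleteSpace X]
    (J : X → X) (hJ : ∀ x y : X, ‖J x - J y‖ ≤ ‖x - y‖)
    (U V : ℝ → X)
    (hU : ∀ t ≥ (0 : ℝ), HasDerivAt U (J (U t) - U t) t)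
    (hV : ∀ t ≥ (0 : ℝ), HasDerivAt V (J (V t) - V t) t) :
    AntitoneOn (fun t => ‖U t - V t‖) (Set.Ici (0 : ℝ)) :=
  norm_sub_solutions_antitone_general J hJ U V hU hV
end

section
/- Let X be a real Banach space, J : X → X nonexpansive, and U : [0,∞) → X a differentiable function satisfying U'(t) = J(U(t)) − U(t) for all t ≥ 0. Then the function t ↦ ‖U'(t)‖ = ‖J(U(t)) − U(t)‖ is non-increasing on [0,∞). -/
/-!
For `h ≥ 0` the increment `W t = U (t + h) - U t` solves `W' = (J (U (t + h)) - J (U t)) - W`,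
whose forcing term has norm at most `‖W‖`. Hence `‖eᵗ W'‖ ≤ ‖eᵗ W‖` and Grönwall's inequality
gives `eᵗ ‖W t‖ ≤ eᵗ ‖W s‖` for `s ≤ t`: the increments of `U` shrink in time. Dividing by `h`
and letting `h → 0⁺` yields the monotonicity of `‖U'‖`.
-/

open Real Set Filter Topology

section

variable {X : Type*} [NormedAddCommGroup X] [NormedSpace ℝ X]

lemma hasDerivAt_exp_smul_of_hasDerivAt_sub_self {f : ℝ → X} {v : X} {x : ℝ}
    (hf : HasDerivAt f (v - f x) x) :
    HasDerivAt (fun y => exp y • f y) (exp x • v) x := by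
  convert (hasDerivAt_exp x).smul hf using 1
  · rfl
  · rw [smul_sub]
    abel

lemma antitoneOn_norm_of_hasDerivAt_sub_self {f v : ℝ → X} {a : ℝ}
    (hf : ∀ x ≥ a, HasDerivAt f (v x - f x) x) (hv : ∀ x ≥ a, ‖v x‖ ≤ ‖f x‖) :
    AntitoneOn (fun x => ‖f x‖) (Ici a) := by
  intro s hs t _ hst
  have hderiv : ∀ x ∈ Icc s t, HasDerivAt (fun y => exp y • f y) (exp x • v x) x :=
    fun x hx => hasDerivAt_exp_smul_of_hasDerivAt_sub_self (hf x (le_trans hs hx.1))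
  have hbound : ∀ x ∈ Ico s t, ‖exp x • v x‖ ≤ 1 * ‖exp x • f x‖ + 0 := fun x hx => by
    simp only [norm_smul, norm_of_nonneg (exp_pos x).le, one_mul, add_zero]
    exact mul_le_mul_of_nonneg_left (hv x (le_trans hs hx.1)) (exp_pos x).le
  have hgronwall := norm_le_gronwallBound_of_norm_deriv_right_le
    (fun x hx => (hderiv x hx).continuousAt.continuousWithinAt)
    (fun x hx => (hderiv x (Ico_subset_Icc_self hx)).hasDerivWithinAt) le_rfl hbound
    t (right_mem_Icc.2 hst)
  rw [gronwallBound_ε0, one_mul, exp_sub] at hgronwall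
  simp only [norm_smul, norm_of_nonneg (exp_pos _).le] at hgronwall
  have : exp t * ‖f t‖ ≤ exp t * ‖f s‖ := by
    calc exp t * ‖f t‖ ≤ exp s * ‖f s‖ * (exp t / exp s) := hgronwall
      _ = exp t * ‖f s‖ := by field_simp
  exact le_of_mul_le_mul_left this (exp_pos t)

lemma antitoneOn_norm_deriv_of_antitoneOn_norm_sub_shift {U U' : ℝ → X} {S : Set ℝ}
    (hU : ∀ t ∈ S, HasDerivAt U (U' t) t)
    (hshift : ∀ h > 0, AntitoneOn (fun t => ‖U (t + h) - U t‖) S) :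
    AntitoneOn (fun t => ‖U' t‖) S := by
  intro s hs t ht hst
  refine le_of_tendsto_of_tendsto (hU t ht).tendsto_slope_zero_right.norm
    (hU s hs).tendsto_slope_zero_right.norm ?_
  filter_upwards [self_mem_nhdsWithin] with h (hh : 0 < h)
  simp only [norm_smul]
  exact mul_le_mul_of_nonneg_left (hshift h hh hs ht hst) (norm_nonneg _)

lemma antitoneOn_norm_sub_shift_of_nonexpansive (J : X → X)
    (hJ : ∀ x y : X, ‖J x - J y‖ ≤ ‖x - y‖) {U : ℝ → X} {a h : ℝ} (hh : 0 ≤ h)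
    (hU : ∀ t ≥ a, HasDerivAt U (J (U t) - U t) t) :
    AntitoneOn (fun t => ‖U (t + h) - U t‖) (Ici a) := by
  refine antitoneOn_norm_of_hasDerivAt_sub_self (v := fun t => J (U (t + h)) - J (U t))
    (fun t ht => ?_) (fun _ _ => hJ _ _)
  have hUh : HasDerivAt (fun y => U (y + h)) (J (U (t + h)) - U (t + h)) t :=
    (hU (t + h) (by linarith [show a ≤ t from ht])).comp_add_const t h
  convert hUh.sub (hU t ht) using 1
  · rfl
  · abel

end

theorem norm_deriv_solution_antitone_general
    {X : Type*} [NormedAddCommGroup X] [NormedSpace ℝ X]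
    (J : X → X) (hJ : ∀ x y : X, ‖J x - J y‖ ≤ ‖x - y‖)
    (U : ℝ → X)
    (hU : ∀ t ≥ (0 : ℝ), HasDerivAt U (J (U t) - U t) t) :
    AntitoneOn (fun t => ‖J (U t) - U t‖) (Set.Ici (0 : ℝ)) :=
  antitoneOn_norm_deriv_of_antitoneOn_norm_sub_shift hU
    fun _ hh => antitoneOn_norm_sub_shift_of_nonexpansive J hJ hh.le hU

/-- if `U` solves `U'(t) = J(U(t)) - U(t)` on `[0,∞)` for a
nonexpansive `J`, then `t ↦ ‖U'(t)‖ = ‖J(U(t)) - U(t)‖` is non-increasing on `[0,∞)`. -/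
theorem norm_deriv_solution_antitone
    {X : Type*} [NormedAddCommGroup X] [NormedSpace ℝ X] [CompleteSpace X]
    (J : X → X) (hJ : ∀ x y : X, ‖J x - J y‖ ≤ ‖x - y‖)
    (U : ℝ → X)
    (hU : ∀ t ≥ (0 : ℝ), HasDerivAt U (J (U t) - U t) t) :
    AntitoneOn (fun t => ‖J (U t) - U t‖) (Set.Ici (0 : ℝ)) :=
  norm_deriv_solution_antitone_general J hJ U hU
end

section
/- (Chernoff's estimate) Let X be a real Banach space, J : X → X nonexpansive, U_0 ∈ X, and U : [0,∞) → X the differentiable solution of U'(t) = J(U(t)) − U(t) with U(0) = U_0. Then for every t ≥ 0 and every natural number n, ‖U(t) − J^n(U_0)‖ ≤ ‖J(U_0) − U_0‖ · √(t + (n − t)²). -/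
/-!
Let `d = ‖J U₀ - U₀‖` and `φₙ t = ‖U t - Jⁿ U₀‖`. Convexity of the norm gives, for right Dini
derivatives, `φₙ₊₁' ≤ ‖J (U t) - Jⁿ⁺¹ U₀‖ - φₙ₊₁ ≤ φₙ - φₙ₊₁`, the second step because `J` is
nonexpansive; likewise `φ₀' ≤ d`. The bound `bₙ t = √(t + (n - t)²)` satisfies the reverse
inequality `bₙ ≤ bₙ₊₁ + bₙ₊₁'`, and `φₙ₊₁ 0 = ‖U₀ - Jⁿ⁺¹ U₀‖ ≤ (n + 1) d = d bₙ₊₁ 0`, so a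
comparison argument and induction on `n` give `φₙ ≤ d bₙ`.
-/

open Set Filter
open scoped Topology

/-- Perturbing `B` by `ε * exp` makes the boundary condition of
`image_le_of_liminf_slope_right_lt_deriv_boundary` strict. -/
theorem image_le_of_liminf_slope_right_le_sub {f g B B' : ℝ → ℝ} {a b : ℝ}
    (hf : ContinuousOn f (Icc a b))
    (hslope : ∀ x ∈ Ico a b, ∀ r, g x - f x < r → ∃ᶠ z in 𝓝[>] x, slope f x z < r)
    (ha : f a ≤ B a) (hB : ∀ x, HasDerivAt B (B' x) x)
    (hg : ∀ x ∈ Ico a b, g x ≤ B x + B' x) :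
    ∀ ⦃x⦄, x ∈ Icc a b → f x ≤ B x := by
  intro x hx
  have perturbed : ∀ ε > 0, f x ≤ B x + ε * Real.exp x := fun ε hε =>
    image_le_of_liminf_slope_right_lt_deriv_boundary (f' := fun y => g y - f y)
      (B := fun y => B y + ε * Real.exp y) (B' := fun y => B' y + ε * Real.exp y) hf hslope
      (by have := Real.exp_pos a; nlinarith)
      (fun y => (hB y).add ((Real.hasDerivAt_exp y).const_mul ε))
      (fun y hy hfy => by have := Real.exp_pos y; have := hg y hy; nlinarith)
      hx
  refine le_of_forall_pos_le_add fun δ hδ => ?_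
  simpa [div_mul_cancel₀ δ (Real.exp_pos x).ne'] using
    perturbed (δ / Real.exp x) (div_pos hδ (Real.exp_pos x))

noncomputable def chernoffBound (n t : ℝ) : ℝ := √(t + (n - t) ^ 2)

theorem chernoffBound_zero_right {n : ℝ} (hn : 0 ≤ n) : chernoffBound n 0 = n := by
  simp [chernoffBound, Real.sqrt_sq hn]

theorem le_chernoffBound_zero_left {t : ℝ} (ht : 0 ≤ t) : t ≤ chernoffBound 0 t :=
  Real.le_sqrt_of_sq_le (by nlinarith)

theorem chernoffBound_radicand_pos {n : ℝ} (hn : 1 / 4 < n) (t : ℝ) : 0 < t + (n - t) ^ 2 := by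
  nlinarith [sq_nonneg (n - t - 1 / 2)]

theorem hasDerivAt_chernoffBound {n : ℝ} (hn : 1 / 4 < n) (t : ℝ) :
    HasDerivAt (chernoffBound n) ((1 - 2 * (n - t)) / (2 * chernoffBound n t)) t := by
  have hq : HasDerivAt (fun s => s + (n - s) ^ 2) (1 - 2 * (n - t)) t :=
    ((hasDerivAt_id' t).fun_add (((hasDerivAt_id' t).const_sub n).fun_pow 2)).congr_deriv
      (by norm_num; ring)
  exact hq.sqrt (chernoffBound_radicand_pos hn t).ne'

/-- Since `chernoffBound n t ^ 2 = chernoffBound (n + 1) t ^ 2 + 1 - 2 * (n + 1 - t)`, this is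
AM-GM for `chernoffBound n t` and `chernoffBound (n + 1) t`. -/
theorem chernoffBound_le_add_deriv {n t : ℝ} (hn : 0 ≤ n) (ht : 0 ≤ t) :
    chernoffBound n t ≤
      chernoffBound (n + 1) t + (1 - 2 * (n + 1 - t)) / (2 * chernoffBound (n + 1) t) := by
  have hpos : 0 < chernoffBound (n + 1) t :=
    Real.sqrt_pos.2 (chernoffBound_radicand_pos (by linarith) t)
  have hsq : chernoffBound (n + 1) t ^ 2 = t + (n + 1 - t) ^ 2 :=
    Real.sq_sqrt (chernoffBound_radicand_pos (by linarith) t).le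
  have hsq' : chernoffBound n t ^ 2 = t + (n - t) ^ 2 := Real.sq_sqrt (by positivity)
  rw [← sub_le_iff_le_add', le_div_iff₀ (by positivity)]
  nlinarith [sq_nonneg (chernoffBound n t - chernoffBound (n + 1) t)]

section Seminormed

variable {X : Type*} [SeminormedAddCommGroup X]

theorem norm_sub_iterate_le {J : X → X} (hJ : ∀ x y : X, ‖J x - J y‖ ≤ ‖x - y‖) (x : X) :
    ∀ n : ℕ, ‖x - J^[n] x‖ ≤ n * ‖J x - x‖
  | 0 => by simp
  | n + 1 => by
    calc ‖x - J^[n + 1] x‖ ≤ ‖x - J x‖ + ‖J x - J (J^[n] x)‖ := by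
          rw [Function.iterate_succ_apply']; exact norm_sub_le_norm_sub_add_norm_sub _ _ _
      _ ≤ ‖J x - x‖ + n * ‖J x - x‖ := by
          rw [norm_sub_rev x]; gcongr; exact (hJ _ _).trans (norm_sub_iterate_le hJ x n)
      _ = (n + 1 : ℕ) * ‖J x - x‖ := by push_cast; ring

variable [NormedSpace ℝ X]

theorem slope_norm_sub_le (U : ℝ → X) (c v : X) {x z : ℝ} (hxz : x < z) (hz : z ≤ x + 1) :
    slope (fun t => ‖U t - c‖) x z ≤ ‖U x + v - c‖ - ‖U x - c‖ + ‖slope U x z - v‖ := by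
  have hh : 0 < z - x := sub_pos.2 hxz
  have hdecomp : U z - c = (1 - (z - x)) • (U x - c) + (z - x) • (U x + v - c)
      + (z - x) • (slope U x z - v) := by
    have hs : (z - x) • slope U x z = U z - U x := by
      rw [slope_def_module, smul_inv_smul₀ hh.ne']
    rw [smul_sub (z - x) (slope U x z) v, hs]
    module
  have hnorm : ‖U z - c‖ ≤ (1 - (z - x)) * ‖U x - c‖ + (z - x) * ‖U x + v - c‖
      + (z - x) * ‖slope U x z - v‖ := by
    rw [hdecomp]
    refine (norm_add_le _ _).trans (add_le_add (norm_add_le _ _ |>.trans (le_of_eq ?_)) ?_)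
    · rw [norm_smul, norm_smul, Real.norm_of_nonneg (by linarith), Real.norm_of_nonneg hh.le]
    · rw [norm_smul, Real.norm_of_nonneg hh.le]
  rw [slope_def_field, div_le_iff₀ hh]
  linarith

end Seminormed

section Normed

variable {X : Type*} [NormedAddCommGroup X] [NormedSpace ℝ X]

theorem eventually_slope_norm_sub_lt {U : ℝ → X} {v : X} {x : ℝ}
    (hU : HasDerivWithinAt U v (Ioi x) x) (c : X) {r : ℝ}
    (hr : ‖U x + v - c‖ - ‖U x - c‖ < r) :
    ∀ᶠ z in 𝓝[>] x, slope (fun t => ‖U t - c‖) x z < r := by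
  have hv : Tendsto (fun z => ‖slope U x z - v‖) (𝓝[>] x) (𝓝 0) :=
    tendsto_iff_norm_sub_tendsto_zero.1
      ((hasDerivWithinAt_iff_tendsto_slope' self_notMem_Ioi).1 hU)
  filter_upwards [hv.eventually (gt_mem_nhds (sub_pos.2 hr)),
    Ioc_mem_nhdsGT_of_mem ⟨le_rfl, lt_add_one x⟩] with z hz hzx
  linarith [slope_norm_sub_le U c v hzx.1 hzx.2]

variable {J : X → X} {U : ℝ → X}

theorem frequently_slope_norm_sub_lt {x : ℝ} (hU : HasDerivAt U (J (U x) - U x) x) (c : X)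
    {r : ℝ} (hr : ‖J (U x) - c‖ - ‖U x - c‖ < r) :
    ∃ᶠ z in 𝓝[>] x, slope (fun t => ‖U t - c‖) x z < r :=
  (eventually_slope_norm_sub_lt hU.hasDerivWithinAt c (by rwa [add_sub_cancel])).frequently

theorem continuousOn_norm_sub (hU : ∀ t ≥ (0 : ℝ), HasDerivAt U (J (U t) - U t) t) (c : X)
    (T : ℝ) : ContinuousOn (fun t => ‖U t - c‖) (Icc 0 T) := fun t ht =>
  ((hU t ht.1).continuousAt.sub continuousAt_const).norm.continuousWithinAt

theorem norm_sub_initial_le (hJ : ∀ x y : X, ‖J x - J y‖ ≤ ‖x - y‖)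
    (hU : ∀ t ≥ (0 : ℝ), HasDerivAt U (J (U t) - U t) t) {T : ℝ} (hT : 0 ≤ T) :
    ‖U T - U 0‖ ≤ ‖J (U 0) - U 0‖ * T := by
  set d := ‖J (U 0) - U 0‖
  refine image_le_of_liminf_slope_right_le_deriv_boundary (continuousOn_norm_sub hU (U 0) T)
    (B := fun t => d * t) (B' := fun _ => d) (by simp) (by fun_prop)
    (fun t _ => ((hasDerivAt_id t).const_mul d).hasDerivWithinAt.congr_deriv (mul_one d))
    (fun t ht r hr => frequently_slope_norm_sub_lt (hU t ht.1) (U 0) ?_) (right_mem_Icc.2 hT)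
  calc ‖J (U t) - U 0‖ - ‖U t - U 0‖
      ≤ ‖J (U t) - J (U 0)‖ + d - ‖U t - U 0‖ := by
        gcongr; exact norm_sub_le_norm_sub_add_norm_sub _ _ _
    _ ≤ d := by linarith [hJ (U t) (U 0)]
    _ < r := hr

theorem norm_sub_iterate_succ_le (hJ : ∀ x y : X, ‖J x - J y‖ ≤ ‖x - y‖)
    (hU : ∀ t ≥ (0 : ℝ), HasDerivAt U (J (U t) - U t) t) (n : ℕ)
    (hn : ∀ t ≥ (0 : ℝ), ‖U t - J^[n] (U 0)‖ ≤ ‖J (U 0) - U 0‖ * chernoffBound n t)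
    {T : ℝ} (hT : 0 ≤ T) :
    ‖U T - J^[n + 1] (U 0)‖ ≤ ‖J (U 0) - U 0‖ * chernoffBound (n + 1) T := by
  set d := ‖J (U 0) - U 0‖
  set c := J^[n + 1] (U 0)
  have hn' : (1 : ℝ) / 4 < n + 1 := by linarith [n.cast_nonneg (α := ℝ)]
  refine image_le_of_liminf_slope_right_le_sub (continuousOn_norm_sub hU c T)
    (g := fun t => ‖J (U t) - c‖)
    (fun t ht r hr => frequently_slope_norm_sub_lt (hU t ht.1) c hr) ?_
    (fun t => (hasDerivAt_chernoffBound hn' t).const_mul d) (fun t ht => ?_) (right_mem_Icc.2 hT)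
  · rw [chernoffBound_zero_right (by positivity), mul_comm]
    exact_mod_cast norm_sub_iterate_le hJ (U 0) (n + 1)
  · calc ‖J (U t) - c‖ ≤ ‖U t - J^[n] (U 0)‖ := by
          simpa only [c, Function.iterate_succ_apply'] using hJ _ _
      _ ≤ d * chernoffBound n t := hn t ht.1
      _ ≤ _ := by
          rw [← mul_add]; gcongr
          exact chernoffBound_le_add_deriv n.cast_nonneg ht.1

end Normed

theorem chernoff_estimate_general
    {X : Type*} [NormedAddCommGroup X] [NormedSpace ℝ X]
    (J : X → X) (hJ : ∀ x y : X, ‖J x - J y‖ ≤ ‖x - y‖)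
    (U₀ : X) (U : ℝ → X)
    (hU : ∀ t ≥ (0 : ℝ), HasDerivAt U (J (U t) - U t) t)
    (hU0 : U 0 = U₀) :
    ∀ t ≥ (0 : ℝ), ∀ n : ℕ,
      ‖U t - J^[n] U₀‖ ≤ ‖J U₀ - U₀‖ * Real.sqrt (t + ((n : ℝ) - t) ^ 2) := by
  subst hU0
  intro t ht n
  change _ ≤ _ * chernoffBound n t
  induction n generalizing t with
  | zero =>
    calc ‖U t - U 0‖ ≤ ‖J (U 0) - U 0‖ * t := norm_sub_initial_le hJ hU ht
      _ ≤ _ := by gcongr; exact_mod_cast le_chernoffBound_zero_left ht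
  | succ n ih =>
    exact_mod_cast norm_sub_iterate_succ_le hJ hU n ih ht

/-- Chernoff's estimate: if `U` solves `U'(t) = J(U(t)) - U(t)` with
`U(0) = U₀` for a nonexpansive `J`, then for every `t ≥ 0` and `n : ℕ`,
`‖U(t) - J^n(U₀)‖ ≤ ‖J(U₀) - U₀‖ √(t + (n - t)²)`. -/
theorem chernoff_estimate
    {X : Type*} [NormedAddCommGroup X] [NormedSpace ℝ X] [CompleteSpace X]
    (J : X → X) (hJ : ∀ x y : X, ‖J x - J y‖ ≤ ‖x - y‖)
    (U₀ : X) (U : ℝ → X)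
    (hU : ∀ t ≥ (0 : ℝ), HasDerivAt U (J (U t) - U t) t)
    (hU0 : U 0 = U₀) :
    ∀ t ≥ (0 : ℝ), ∀ n : ℕ,
      ‖U t - J^[n] U₀‖ ≤ ‖J U₀ - U₀‖ * Real.sqrt (t + ((n : ℝ) - t) ^ 2) :=
  chernoff_estimate_general J hJ U₀ U hU hU0
end

section
/- Let X be a real Banach space, J : X → X nonexpansive, and U : [0,∞) → X the differentiable solution of U'(t) = J(U(t)) − U(t) with U(0) = 0. Then for every n ≥ 1, ‖U(n)/n − J^n(0)/n‖ ≤ ‖J(0)‖/√n. Consequently v_n = J^n(0)/n converges (as n → ∞) if and only if U(t)/t converges (as t → ∞), and in that case the limits coincide. -/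
/-!
Two solutions of `u' = J u - u` contract: `e^t (u - v)` has derivative `e^t (J u - J v)`, whose
norm is at most `‖e^t (u - v)‖`, so Gronwall gives `‖u t - v t‖ ≤ ‖u 0 - v 0‖`. Applied to the
time shifts of `U`, this makes `‖U'‖` nonincreasing, so `U` is `‖J x - x‖`-Lipschitz, `x = U 0`.

The estimate `‖U t - J^n x‖ ≤ ‖J x - x‖ √((t - n)² + t)` follows by induction on `n`. The
derivative of `e^r (U r - J^{n+1} x)` has norm at most `e^r ‖U r - J^n x‖`; bounding
`√q ≤ (q + S²) / (2S)` in the induction hypothesis, with `S = √((t - n - 1)² + t)`, gives a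
majorant with the explicit antiderivative `e^r ((r - n - 1)² + r + S²) / (2S)` (times
`‖J x - x‖`), and comparing at `r = t` closes the induction.
At `t = n` this is the first claim. Since `U` is Lipschitz, `U t / t` is within `O(1/t)` of
`U ⌊t⌋ / ⌊t⌋`, which together with the first claim gives the second.
-/

open Filter Set Topology Real

section

variable {X : Type*} [NormedAddCommGroup X] [NormedSpace ℝ X]

lemma LipschitzWith.dist_iterate_self_le {α : Type*} [PseudoMetricSpace α] {f : α → α}
    (hf : LipschitzWith 1 f) (x : α) (n : ℕ) : dist (f^[n] x) x ≤ n * dist (f x) x := by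
  induction n with
  | zero => simp
  | succ n ih =>
    have hstep : dist (f^[n + 1] x) (f^[n] x) ≤ dist (f x) x := by
      simpa [dist_comm] using hf.dist_iterate_succ_le_geometric x n
    calc dist (f^[n + 1] x) x ≤ dist (f^[n + 1] x) (f^[n] x) + dist (f^[n] x) x :=
          dist_triangle _ _ _
      _ ≤ dist (f x) x + n * dist (f x) x := add_le_add hstep ih
      _ = (n + 1 : ℕ) * dist (f x) x := by push_cast; ring

lemma Real.sqrt_le_add_sq_div {q μ : ℝ} (hq : 0 ≤ q) (hμ : 0 < μ) :
    √q ≤ (q + μ ^ 2) / (2 * μ) := by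
  rw [le_div_iff₀ (by positivity)]
  nlinarith [two_mul_le_add_sq (√q) μ, sq_sqrt hq]

lemma hasDerivAt_exp_mul_sq_sub_add (a x : ℝ) :
    HasDerivAt (fun x => exp x * ((x - (a + 1)) ^ 2 + x)) (exp x * ((x - a) ^ 2 + x)) x := by
  have hq : HasDerivAt (fun x : ℝ => (x - (a + 1)) ^ 2 + x) (2 * (x - (a + 1)) + 1) x := by
    simpa using (((hasDerivAt_id' x).sub_const (a + 1)).fun_pow 2).fun_add (hasDerivAt_id' x)
  exact ((hasDerivAt_exp x).mul hq).congr_deriv (by ring)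

lemma LipschitzOnWith.tendsto_inv_smul_atTop_iff {f : ℝ → X} {C : NNReal}
    (hf : LipschitzOnWith C f (Ici 0)) {l : X} :
    Tendsto (fun t : ℝ => t⁻¹ • f t) atTop (𝓝 l) ↔
      Tendsto (fun n : ℕ => (n : ℝ)⁻¹ • f n) atTop (𝓝 l) := by
  refine ⟨fun h => h.comp tendsto_natCast_atTop_atTop, fun h => ?_⟩
  have hfloor : Tendsto (fun t : ℝ => (⌊t⌋₊ / t) • ((⌊t⌋₊ : ℝ)⁻¹ • f ⌊t⌋₊)) atTop (𝓝 l) := by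
    simpa using (tendsto_nat_floor_div_atTop (R := ℝ)).smul (h.comp tendsto_nat_floor_atTop)
  have herr : Tendsto (fun t : ℝ => t⁻¹ • (f t - f ⌊t⌋₊)) atTop (𝓝 0) := by
    refine squeeze_zero_norm' (a := fun t : ℝ => C * t⁻¹) ?_
      (by simpa using tendsto_inv_atTop_zero.const_mul (C : ℝ))
    filter_upwards [eventually_gt_atTop 0] with t ht
    have hlip := hf.norm_sub_le (x := t) (y := ⌊t⌋₊) ht.le (mem_Ici.2 (Nat.cast_nonneg _))
    have hfrac : ‖t - ⌊t⌋₊‖ ≤ 1 := by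
      rw [Real.norm_of_nonneg (sub_nonneg.2 (Nat.floor_le ht.le))]
      linarith [Nat.lt_floor_add_one t]
    rw [norm_smul, norm_inv, Real.norm_of_nonneg ht.le, mul_comm]
    gcongr
    simpa using hlip.trans (mul_le_of_le_one_right C.2 hfrac)
  rw [← add_zero l]
  refine (hfloor.add herr).congr' ?_
  filter_upwards [eventually_ge_atTop 1] with t ht
  have hn : (⌊t⌋₊ : ℝ) ≠ 0 := Nat.cast_ne_zero.2 (Nat.floor_pos.2 ht).ne'
  rw [smul_smul, show (⌊t⌋₊ : ℝ) / t * (⌊t⌋₊ : ℝ)⁻¹ = t⁻¹ by field_simp, ← smul_add,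
    add_sub_cancel]

def SolvesEvolutionEq (J : X → X) (U : ℝ → X) : Prop :=
  ∀ t ≥ (0 : ℝ), HasDerivAt U (J (U t) - U t) t

namespace SolvesEvolutionEq

variable {J : X → X} {U V : ℝ → X}

lemma comp_add_const (hU : SolvesEvolutionEq J U) {h : ℝ} (hh : 0 ≤ h) :
    SolvesEvolutionEq J (fun t => U (t + h)) :=
  fun t ht => (hU (t + h) (by linarith)).comp_add_const t h

lemma hasDerivAt_exp_smul_sub (hU : SolvesEvolutionEq J U) {v' : X} {t : ℝ} (ht : 0 ≤ t)
    (hV : HasDerivAt V v' t) :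
    HasDerivAt (fun s => exp s • (U s - V s)) (exp t • (J (U t) - V t - v')) t := by
  refine ((hasDerivAt_exp t).fun_smul ((hU t ht).fun_sub hV)).congr_deriv ?_
  rw [← smul_add]
  congr 1
  abel

lemma norm_sub_le (hJ : LipschitzWith 1 J) (hU : SolvesEvolutionEq J U)
    (hV : SolvesEvolutionEq J V) {t : ℝ} (ht : 0 ≤ t) : ‖U t - V t‖ ≤ ‖U 0 - V 0‖ := by
  have hF (s : ℝ) (hs : 0 ≤ s) :
      HasDerivAt (fun s => exp s • (U s - V s)) (exp s • (J (U s) - J (V s))) s := by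
    convert hU.hasDerivAt_exp_smul_sub hs (hV s hs) using 2
    abel
  have hgronwall := norm_le_gronwallBound_of_norm_deriv_right_le
    (δ := ‖U 0 - V 0‖) (K := 1) (ε := 0)
    (fun s hs => (hF s hs.1).continuousAt.continuousWithinAt)
    (fun s hs => (hF s hs.1).hasDerivWithinAt) (le_of_eq (by simp))
    (fun s _ => by
      rw [norm_smul, norm_smul, one_mul, add_zero]
      gcongr
      simpa [dist_eq_norm] using hJ.dist_le_mul (U s) (V s)) t ⟨ht, le_rfl⟩
  rw [gronwallBound_ε0, norm_smul, Real.norm_of_nonneg (exp_pos t).le, sub_zero, one_mul,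
    mul_comm] at hgronwall
  exact le_of_mul_le_mul_right hgronwall (exp_pos t)

lemma norm_deriv_le (hJ : LipschitzWith 1 J) (hU : SolvesEvolutionEq J U) {t : ℝ} (ht : 0 ≤ t) :
    ‖J (U t) - U t‖ ≤ ‖J (U 0) - U 0‖ := by
  refine le_of_tendsto_of_tendsto (hU t ht).tendsto_slope_zero_right.norm
    (hU 0 le_rfl).tendsto_slope_zero_right.norm ?_
  filter_upwards [self_mem_nhdsWithin] with h (hh : 0 < h)
  rw [norm_smul, norm_smul, zero_add]
  gcongr
  simpa [add_comm] using (hU.comp_add_const hh.le).norm_sub_le hJ hU ht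

lemma lipschitzOnWith (hJ : LipschitzWith 1 J) (hU : SolvesEvolutionEq J U) :
    LipschitzOnWith ‖J (U 0) - U 0‖₊ U (Ici 0) :=
  (convex_Ici 0).lipschitzOnWith_of_nnnorm_hasDerivWithin_le
    (fun t ht => (hU t ht).hasDerivWithinAt) (fun _ ht => hU.norm_deriv_le hJ ht)

lemma exp_mul_norm_sub_le (hJ : LipschitzWith 1 J) (hU : SolvesEvolutionEq J U) {c : X}
    {g G : ℝ → ℝ} (hG : ∀ r, HasDerivAt G (exp r * g r) r) (hG0 : ‖U 0 - J c‖ ≤ G 0)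
    (hg : ∀ r ≥ 0, ‖U r - c‖ ≤ g r) {t : ℝ} (ht : 0 ≤ t) :
    exp t * ‖U t - J c‖ ≤ G t := by
  have hF (s : ℝ) (hs : 0 ≤ s) :
      HasDerivAt (fun s => exp s • (U s - J c)) (exp s • (J (U s) - J c)) s := by
    simpa using hU.hasDerivAt_exp_smul_sub hs (hasDerivAt_const s (J c))
  have hbound := image_norm_le_of_norm_deriv_right_le_deriv_boundary
    (fun s hs => (hF s hs.1).continuousAt.continuousWithinAt)
    (fun s hs => (hF s hs.1).hasDerivWithinAt) (by simpa using hG0) hG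
    (fun s hs => by
      rw [norm_smul, Real.norm_of_nonneg (exp_pos s).le]
      gcongr
      have hJs : ‖J (U s) - J c‖ ≤ ‖U s - c‖ := by
        simpa [dist_eq_norm] using hJ.dist_le_mul (U s) c
      exact hJs.trans (hg s hs.1))
    ⟨ht, le_rfl⟩
  rwa [norm_smul, Real.norm_of_nonneg (exp_pos t).le] at hbound

lemma norm_sub_iterate_succ_le (hJ : LipschitzWith 1 J) (hU : SolvesEvolutionEq J U) {n : ℕ}
    (ih : ∀ r ≥ 0, ‖U r - J^[n] (U 0)‖ ≤ ‖J (U 0) - U 0‖ * √((r - n) ^ 2 + r)) {t : ℝ}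
    (ht : 0 ≤ t) :
    ‖U t - J^[n + 1] (U 0)‖ ≤ ‖J (U 0) - U 0‖ * √((t - (n + 1)) ^ 2 + t) := by
  set C := ‖J (U 0) - U 0‖
  have hq : 0 < (t - (n + 1)) ^ 2 + t := by
    nlinarith [sq_nonneg (t - (n + 1) + 1 / 2), (Nat.cast_nonneg n : (0 : ℝ) ≤ n)]
  set S := √((t - (n + 1)) ^ 2 + t)
  have hS : 0 < S := Real.sqrt_pos.2 hq
  have hSsq : S ^ 2 = (t - (n + 1)) ^ 2 + t := Real.sq_sqrt hq.le
  have hG (x : ℝ) : HasDerivAt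
      (fun x => C * ((exp x * ((x - (n + 1)) ^ 2 + x) + exp x * S ^ 2 - (n + 1 - S) ^ 2) /
        (2 * S)))
      (exp x * (C * (((x - n) ^ 2 + x + S ^ 2) / (2 * S)))) x :=
    ((((hasDerivAt_exp_mul_sq_sub_add n x).fun_add ((hasDerivAt_exp x).mul_const (S ^ 2)))
      |>.sub_const ((n + 1 - S) ^ 2)).div_const (2 * S) |>.const_mul C).congr_deriv (by ring)
  have hG0 : ‖U 0 - J (J^[n] (U 0))‖ ≤
      C * ((exp 0 * ((0 - (n + 1)) ^ 2 + 0) + exp 0 * S ^ 2 - (n + 1 - S) ^ 2) / (2 * S)) := by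
    have hiter := hJ.dist_iterate_self_le (U 0) (n + 1)
    rw [dist_comm, dist_eq_norm, dist_eq_norm, Function.iterate_succ_apply'] at hiter
    change _ ≤ _ * C at hiter
    refine hiter.trans (le_of_eq ?_)
    rw [exp_zero]
    field_simp
    push_cast
    ring
  have hg (r : ℝ) (hr : 0 ≤ r) :
      ‖U r - J^[n] (U 0)‖ ≤ C * (((r - n) ^ 2 + r + S ^ 2) / (2 * S)) :=
    (ih r hr).trans (by gcongr; exact Real.sqrt_le_add_sq_div (by nlinarith [sq_nonneg (r - n)]) hS)
  have key := hU.exp_mul_norm_sub_le hJ hG hG0 hg ht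
  rw [← Function.iterate_succ_apply' J n, ← hSsq] at key
  refine le_of_mul_le_mul_left (key.trans ?_) (exp_pos t)
  calc _ ≤ C * (exp t * S) := by
        gcongr
        rw [div_le_iff₀ (by positivity)]
        nlinarith [sq_nonneg (n + 1 - S)]
    _ = exp t * (C * S) := by ring

lemma norm_sub_iterate_le (hJ : LipschitzWith 1 J) (hU : SolvesEvolutionEq J U) (n : ℕ) {t : ℝ}
    (ht : 0 ≤ t) : ‖U t - J^[n] (U 0)‖ ≤ ‖J (U 0) - U 0‖ * √((t - n) ^ 2 + t) := by
  induction n generalizing t with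
  | zero =>
    calc ‖U t - U 0‖ ≤ ‖J (U 0) - U 0‖ * ‖t - 0‖ :=
          (hU.lipschitzOnWith hJ).norm_sub_le ht self_mem_Ici
      _ ≤ ‖J (U 0) - U 0‖ * √((t - (0 : ℕ)) ^ 2 + t) := by
        gcongr
        rw [Nat.cast_zero, sub_zero, Real.norm_of_nonneg ht]
        exact Real.le_sqrt_of_sq_le (by linarith)
  | succ n ih =>
    push_cast
    exact hU.norm_sub_iterate_succ_le hJ (fun r hr => ih hr) ht

end SolvesEvolutionEq

end

theorem normalized_solution_close_to_vn_general
    {X : Type*} [NormedAddCommGroup X] [NormedSpace ℝ X]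
    (J : X → X) (hJ : ∀ x y : X, ‖J x - J y‖ ≤ ‖x - y‖)
    (U : ℝ → X)
    (hU : ∀ t ≥ (0 : ℝ), HasDerivAt U (J (U t) - U t) t)
    (hU0 : U 0 = 0) :
    (∀ n : ℕ, 1 ≤ n →
        ‖(n : ℝ)⁻¹ • U (n : ℝ) - (n : ℝ)⁻¹ • J^[n] 0‖ ≤ ‖J 0‖ / Real.sqrt n) ∧
    (∀ l : X,
      Tendsto (fun n : ℕ => (n : ℝ)⁻¹ • J^[n] 0) atTop (nhds l) ↔
      Tendsto (fun t : ℝ => t⁻¹ • U t) atTop (nhds l)) := by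
  have hJ' : LipschitzWith 1 J := .of_dist_le_mul fun x y => by simpa [dist_eq_norm] using hJ x y
  have hU' : SolvesEvolutionEq J U := hU
  have hclose (n : ℕ) (hn : 1 ≤ n) :
      ‖(n : ℝ)⁻¹ • U n - (n : ℝ)⁻¹ • J^[n] 0‖ ≤ ‖J 0‖ / √n := by
    have h := hU'.norm_sub_iterate_le hJ' n (Nat.cast_nonneg n)
    rw [hU0, sub_zero, sub_self, zero_pow two_ne_zero, zero_add] at h
    have hn' : (0 : ℝ) < n := by exact_mod_cast hn
    calc ‖(n : ℝ)⁻¹ • U n - (n : ℝ)⁻¹ • J^[n] 0‖ ≤ (n : ℝ)⁻¹ * (‖J 0‖ * √n) := by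
          rw [← smul_sub, norm_smul, norm_inv, Real.norm_natCast]
          gcongr
      _ = ‖J 0‖ / √n := by
          field_simp
          rw [Real.sq_sqrt hn'.le, mul_comm]
  refine ⟨hclose, fun l => ?_⟩
  rw [(hU'.lipschitzOnWith hJ').tendsto_inv_smul_atTop_iff]
  refine tendsto_iff_of_dist (squeeze_zero' (Eventually.of_forall fun n => dist_nonneg)
    ?_ ((tendsto_const_nhds (x := ‖J 0‖)).div_atTop
      (Real.tendsto_sqrt_atTop.comp tendsto_natCast_atTop_atTop)))
  filter_upwards [eventually_ge_atTop 1] with n hn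
  rw [dist_comm, dist_eq_norm]
  exact hclose n hn

/-- if `U` solves `U'(t) = J(U(t)) - U(t)` with `U(0) = 0` for a
nonexpansive `J`, then `‖U(n)/n - J^n(0)/n‖ ≤ ‖J 0‖/√n` for all `n ≥ 1`; consequently
`v_n = J^n(0)/n` converges to `l` iff `U(t)/t` converges to `l` as `t → ∞`. -/
theorem normalized_solution_close_to_vn
    {X : Type*} [NormedAddCommGroup X] [NormedSpace ℝ X] [CompleteSpace X]
    (J : X → X) (hJ : ∀ x y : X, ‖J x - J y‖ ≤ ‖x - y‖)
    (U : ℝ → X)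
    (hU : ∀ t ≥ (0 : ℝ), HasDerivAt U (J (U t) - U t) t)
    (hU0 : U 0 = 0) :
    (∀ n : ℕ, 1 ≤ n →
        ‖(n : ℝ)⁻¹ • U (n : ℝ) - (n : ℝ)⁻¹ • J^[n] 0‖ ≤ ‖J 0‖ / Real.sqrt n) ∧
    (∀ l : X,
      Tendsto (fun n : ℕ => (n : ℝ)⁻¹ • J^[n] 0) atTop (nhds l) ↔
      Tendsto (fun t : ℝ => t⁻¹ • U t) atTop (nhds l)) :=
  normalized_solution_close_to_vn_general J hJ U hU hU0
end

section
/- (Kobayashi-like inequality for Euler schemes) Let X be a real Banach space, J : X → X nonexpansive, and A = I − J. Let x_0, x̂_0 ∈ X and let (λ_n)_{n≥1}, (λ̂_n)_{n≥1} be sequences in (0,1]. Define the Euler schemes x_n = x_{n−1} − λ_n A(x_{n−1}) and x̂_n = x̂_{n−1} − λ̂_n A(x̂_{n−1}), and set σ_k = Σ_{i=1}^k λ_i, τ_k = Σ_{i=1}^k λ_i², σ̂_l = Σ_{i=1}^l λ̂_i, τ̂_l = Σ_{i=1}^l λ̂_i². Then for every z ∈ X and every k, l ∈ ℕ, ‖x_k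 − x̂_l‖ ≤ ‖x_0 − z‖ + ‖x̂_0 − z‖ + ‖z − J(z)‖ · √((σ_k − σ̂_l)² + τ_k + τ̂_l). -/
/-!
Write `D = α + β - αβ = 1 - (1 - α)(1 - β)` for the step sizes `α = λ_{k+1}`, `β = λ̂_{l+1}`. Expanding both
Euler steps gives the identity
`D (x_{k+1} - x̂_{l+1}) = β(1 - α)(x_k - x̂_{l+1}) + α(1 - β)(x_{k+1} - x̂_l) + αβ(J x_k - J x̂_l)`,
so by nonexpansiveness `D ‖x_{k+1} - x̂_{l+1}‖` is at most the same combination of the three distances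
`‖x_k - x̂_{l+1}‖`, `‖x_{k+1} - x̂_l‖`, `‖x_k - x̂_l‖`. The right-hand side of the inequality satisfies the
reverse recursion: by Cauchy–Schwarz (concavity of `√`) it suffices to compare the arguments of the square
roots, and the weighted combination falls short of `D` times the new argument by exactly `2α²β²`. A double
induction over the grid `(k, l)` finishes the proof, the boundary `k = 0` or `l = 0` being the one-scheme
estimate `‖x_m - z‖ ≤ ‖x_0 - z‖ + σ_m ‖z - J z‖`.
-/

open Finset

theorem grid_induction {P : ℕ → ℕ → Prop} (left : ∀ k, P k 0) (bottom : ∀ l, P 0 l)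
    (step : ∀ k l, P k (l + 1) → P (k + 1) l → P k l → P (k + 1) (l + 1)) : ∀ k l, P k l
  | 0, l => bottom l
  | k + 1, 0 => left (k + 1)
  | k + 1, l + 1 => step k l (grid_induction left bottom step k (l + 1))
      (grid_induction left bottom step (k + 1) l) (grid_induction left bottom step k l)

theorem Real.sum_mul_sqrt_le {ι : Type*} (s : Finset ι) {w g : ι → ℝ} (hw : ∀ i, 0 ≤ w i)
    (hg : ∀ i, 0 ≤ g i) : ∑ i ∈ s, w i * √(g i) ≤ √(∑ i ∈ s, w i) * √(∑ i ∈ s, w i * g i) := by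
  have h := Real.sum_sqrt_mul_sqrt_le s hw fun i => mul_nonneg (hw i) (hg i)
  simp_rw [Real.sqrt_mul (hw _), ← mul_assoc, Real.mul_self_sqrt (hw _)] at h
  exact h

theorem sqrt_kobayashi_supersolution {α β p q P Q : ℝ} (hα₀ : 0 ≤ α) (hα₁ : α ≤ 1) (hβ₀ : 0 ≤ β)
    (hβ₁ : β ≤ 1) (hP : 0 ≤ P) (hQ : 0 ≤ Q) :
    β * (1 - α) * √((p - (q + β)) ^ 2 + P + (Q + β ^ 2))
      + α * (1 - β) * √((p + α - q) ^ 2 + (P + α ^ 2) + Q) + α * β * √((p - q) ^ 2 + P + Q)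
      ≤ (α + β - α * β) * √((p + α - (q + β)) ^ 2 + (P + α ^ 2) + (Q + β ^ 2)) := by
  set G := (p + α - (q + β)) ^ 2 + (P + α ^ 2) + (Q + β ^ 2)
  have hD : 0 ≤ α + β - α * β := by nlinarith
  have hw : ∀ i, 0 ≤ ![β * (1 - α), α * (1 - β), α * β] i := by
    simp only [Fin.forall_fin_succ, IsEmpty.forall_iff, Matrix.cons_val_zero, Matrix.cons_val_succ]
    exact ⟨by positivity, by positivity, by positivity, trivial⟩
  have hg : ∀ i, 0 ≤ ![(p - (q + β)) ^ 2 + P + (Q + β ^ 2), (p + α - q) ^ 2 + (P + α ^ 2) + Q,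
      (p - q) ^ 2 + P + Q] i := by
    simp only [Fin.forall_fin_succ, IsEmpty.forall_iff, Matrix.cons_val_zero, Matrix.cons_val_succ]
    exact ⟨by positivity, by positivity, by positivity, trivial⟩
  have h := Real.sum_mul_sqrt_le univ hw hg
  simp only [Fin.sum_univ_three, Matrix.cons_val] at h
  refine h.trans ?_
  have hcomb : β * (1 - α) * ((p - (q + β)) ^ 2 + P + (Q + β ^ 2))
      + α * (1 - β) * ((p + α - q) ^ 2 + (P + α ^ 2) + Q) + α * β * ((p - q) ^ 2 + P + Q)
      = (α + β - α * β) * G - 2 * α ^ 2 * β ^ 2 := by ring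
  calc √(β * (1 - α) + α * (1 - β) + α * β) * √(_ + _ + _)
      ≤ √(α + β - α * β) * √((α + β - α * β) * G) := by
        rw [hcomb, show β * (1 - α) + α * (1 - β) + α * β = α + β - α * β by ring]
        gcongr
        nlinarith
    _ = (α + β - α * β) * √G := by
        rw [Real.sqrt_mul hD, ← mul_assoc, Real.mul_self_sqrt hD]

section EulerStep

variable {X : Type*}

theorem euler_step_sub_euler_step {R : Type*} [CommRing R] [AddCommGroup X] [Module R X]
    (J : X → X) (u v : X) (α β : R) :
    (α + β - α * β) • (u - α • (u - J u) - (v - β • (v - J v)))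
      = (β * (1 - α)) • (u - (v - β • (v - J v))) + (α * (1 - β)) • (u - α • (u - J u) - v)
        + (α * β) • (J u - J v) := by
  module

variable [NormedAddCommGroup X] [NormedSpace ℝ X] {J : X → X}

theorem norm_euler_step_sub_le {u z : X} {α : ℝ} (hα₀ : 0 ≤ α) (hα₁ : α ≤ 1)
    (hJ : ‖J u - J z‖ ≤ ‖u - z‖) : ‖u - α • (u - J u) - z‖ ≤ ‖u - z‖ + α * ‖z - J z‖ := by
  have h1α : 0 ≤ 1 - α := by linarith
  calc ‖u - α • (u - J u) - z‖ = ‖(1 - α) • (u - z) + α • (J u - J z) + α • (J z - z)‖ := by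
        congr 1; module
    _ ≤ (1 - α) * ‖u - z‖ + α * ‖J u - J z‖ + α * ‖J z - z‖ := by
        refine (norm_add₃_le).trans ?_
        rw [norm_smul_of_nonneg h1α, norm_smul_of_nonneg hα₀, norm_smul_of_nonneg hα₀]
    _ ≤ ‖u - z‖ + α * ‖z - J z‖ := by
        rw [norm_sub_rev (J z)]; nlinarith

theorem mul_norm_euler_step_sub_euler_step_le {u v : X} {α β : ℝ} (hα₀ : 0 ≤ α) (hα₁ : α ≤ 1)
    (hβ₀ : 0 ≤ β) (hβ₁ : β ≤ 1) (hJ : ‖J u - J v‖ ≤ ‖u - v‖) :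
    (α + β - α * β) * ‖u - α • (u - J u) - (v - β • (v - J v))‖
      ≤ β * (1 - α) * ‖u - (v - β • (v - J v))‖ + α * (1 - β) * ‖u - α • (u - J u) - v‖
        + α * β * ‖u - v‖ := by
  have hD : 0 ≤ α + β - α * β := by nlinarith
  rw [← norm_smul_of_nonneg hD, euler_step_sub_euler_step]
  refine (norm_add₃_le).trans ?_
  rw [norm_smul_of_nonneg (by positivity), norm_smul_of_nonneg (by positivity),
    norm_smul_of_nonneg (by positivity)]
  gcongr

theorem norm_euler_step_sub_euler_step_le {u v : X} {α β p q P Q B N : ℝ} (hα₀ : 0 < α)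
    (hα₁ : α ≤ 1) (hβ₀ : 0 ≤ β) (hβ₁ : β ≤ 1) (hP : 0 ≤ P) (hQ : 0 ≤ Q) (hN : 0 ≤ N)
    (hJ : ‖J u - J v‖ ≤ ‖u - v‖)
    (h₁ : ‖u - (v - β • (v - J v))‖ ≤ B + N * √((p - (q + β)) ^ 2 + P + (Q + β ^ 2)))
    (h₂ : ‖u - α • (u - J u) - v‖ ≤ B + N * √((p + α - q) ^ 2 + (P + α ^ 2) + Q))
    (h₃ : ‖u - v‖ ≤ B + N * √((p - q) ^ 2 + P + Q)) :
    ‖u - α • (u - J u) - (v - β • (v - J v))‖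
      ≤ B + N * √((p + α - (q + β)) ^ 2 + (P + α ^ 2) + (Q + β ^ 2)) := by
  have hD : 0 < α + β - α * β := by nlinarith
  refine le_of_mul_le_mul_left ?_ hD
  calc (α + β - α * β) * ‖u - α • (u - J u) - (v - β • (v - J v))‖
      ≤ β * (1 - α) * (B + N * √((p - (q + β)) ^ 2 + P + (Q + β ^ 2)))
        + α * (1 - β) * (B + N * √((p + α - q) ^ 2 + (P + α ^ 2) + Q))
        + α * β * (B + N * √((p - q) ^ 2 + P + Q)) := by
        refine (mul_norm_euler_step_sub_euler_step_le hα₀.le hα₁ hβ₀ hβ₁ hJ).trans ?_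
        gcongr
    _ = (α + β - α * β) * B + N * (β * (1 - α) * √((p - (q + β)) ^ 2 + P + (Q + β ^ 2))
        + α * (1 - β) * √((p + α - q) ^ 2 + (P + α ^ 2) + Q)
        + α * β * √((p - q) ^ 2 + P + Q)) := by ring
    _ ≤ (α + β - α * β) * B
        + N * ((α + β - α * β) * √((p + α - (q + β)) ^ 2 + (P + α ^ 2) + (Q + β ^ 2))) := by
        gcongr
        exact sqrt_kobayashi_supersolution hα₀.le hα₁ hβ₀ hβ₁ hP hQ
    _ = _ := by ring

end EulerStep

section EulerScheme

variable {X : Type*} [NormedAddCommGroup X] [NormedSpace ℝ X]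

theorem norm_euler_scheme_sub_le (J : X → X) (hJ : ∀ x y : X, ‖J x - J y‖ ≤ ‖x - y‖)
    (lam : ℕ → ℝ) (hlam : ∀ n : ℕ, 1 ≤ n → lam n ∈ Set.Ioc (0 : ℝ) 1) (x : ℕ → X)
    (hx : ∀ n : ℕ, 1 ≤ n → x n = x (n - 1) - lam n • (x (n - 1) - J (x (n - 1)))) (z : X) :
    ∀ m, ‖x m - z‖ ≤ ‖x 0 - z‖ + (∑ i ∈ Icc 1 m, lam i) * ‖z - J z‖
  | 0 => by simp
  | m + 1 => by
    obtain ⟨hα₀, hα₁⟩ := hlam (m + 1) m.succ_pos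
    rw [hx (m + 1) m.succ_pos, Nat.add_sub_cancel, sum_Icc_succ_top (Nat.le_add_left 1 m), add_mul,
      ← add_assoc]
    exact (norm_euler_step_sub_le hα₀.le hα₁ (hJ _ _)).trans
      (add_le_add_left (norm_euler_scheme_sub_le J hJ lam hlam x hx z m) _)

theorem norm_euler_scheme_sub_le_sqrt (J : X → X) (hJ : ∀ x y : X, ‖J x - J y‖ ≤ ‖x - y‖)
    (lam : ℕ → ℝ) (hlam : ∀ n : ℕ, 1 ≤ n → lam n ∈ Set.Ioc (0 : ℝ) 1) (x : ℕ → X)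
    (hx : ∀ n : ℕ, 1 ≤ n → x n = x (n - 1) - lam n • (x (n - 1) - J (x (n - 1)))) (y z : X)
    (m : ℕ) : ‖x m - y‖ ≤ ‖x 0 - z‖ + ‖y - z‖ + ‖z - J z‖ *
      √((∑ i ∈ Icc 1 m, lam i) ^ 2 + ∑ i ∈ Icc 1 m, lam i ^ 2) := by
  have hσ : ∑ i ∈ Icc 1 m, lam i ≤ √((∑ i ∈ Icc 1 m, lam i) ^ 2 + ∑ i ∈ Icc 1 m, lam i ^ 2) :=
    Real.le_sqrt_of_sq_le (le_add_of_nonneg_right (sum_nonneg fun i _ => sq_nonneg (lam i)))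
  calc ‖x m - y‖ ≤ ‖x m - z‖ + ‖y - z‖ := by
        simpa only [norm_sub_rev z] using norm_sub_le_norm_sub_add_norm_sub (x m) z y
    _ ≤ ‖x 0 - z‖ + (∑ i ∈ Icc 1 m, lam i) * ‖z - J z‖ + ‖y - z‖ := by
        gcongr; exact norm_euler_scheme_sub_le J hJ lam hlam x hx z m
    _ ≤ _ := by nlinarith [norm_nonneg (z - J z)]

end EulerScheme

theorem kobayashi_euler_inequality_general
    {X : Type*} [NormedAddCommGroup X] [NormedSpace ℝ X]
    (J : X → X) (hJ : ∀ x y : X, ‖J x - J y‖ ≤ ‖x - y‖)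
    (lam lamh : ℕ → ℝ)
    (hlam : ∀ n : ℕ, 1 ≤ n → lam n ∈ Set.Ioc (0 : ℝ) 1)
    (hlamh : ∀ n : ℕ, 1 ≤ n → lamh n ∈ Set.Ioc (0 : ℝ) 1)
    (x xh : ℕ → X)
    (hx : ∀ n : ℕ, 1 ≤ n → x n = x (n - 1) - lam n • (x (n - 1) - J (x (n - 1))))
    (hxh : ∀ n : ℕ, 1 ≤ n → xh n = xh (n - 1) - lamh n • (xh (n - 1) - J (xh (n - 1)))) :
    ∀ (z : X) (k l : ℕ),
      ‖x k - xh l‖ ≤ ‖x 0 - z‖ + ‖xh 0 - z‖ + ‖z - J z‖ *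
        Real.sqrt (((∑ i ∈ Finset.Icc 1 k, lam i) - ∑ i ∈ Finset.Icc 1 l, lamh i) ^ 2
          + (∑ i ∈ Finset.Icc 1 k, (lam i) ^ 2) + ∑ i ∈ Finset.Icc 1 l, (lamh i) ^ 2) := by
  intro z
  refine grid_induction (fun k => ?_) (fun l => ?_) fun k l h₁ h₂ h₃ => ?_
  · simpa using norm_euler_scheme_sub_le_sqrt J hJ lam hlam x hx (xh 0) z k
  · rw [norm_sub_rev, add_comm ‖x 0 - z‖]
    simpa using norm_euler_scheme_sub_le_sqrt J hJ lamh hlamh xh hxh (x 0) z l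
  · obtain ⟨hα₀, hα₁⟩ := hlam (k + 1) k.succ_pos
    obtain ⟨hβ₀, hβ₁⟩ := hlamh (l + 1) l.succ_pos
    have hxk : x (k + 1) = x k - lam (k + 1) • (x k - J (x k)) := hx (k + 1) k.succ_pos
    have hxhl : xh (l + 1) = xh l - lamh (l + 1) • (xh l - J (xh l)) := hxh (l + 1) l.succ_pos
    rw [hxhl] at h₁
    rw [hxk] at h₂
    rw [hxk, hxhl]
    simp only [sum_Icc_succ_top (Nat.le_add_left 1 _)] at h₁ h₂ ⊢
    exact norm_euler_step_sub_euler_step_le hα₀ hα₁ hβ₀.le hβ₁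
      (sum_nonneg fun i _ => sq_nonneg _) (sum_nonneg fun i _ => sq_nonneg _) (norm_nonneg _)
      (hJ _ _) h₁ h₂ h₃

/-- Kobayashi-like inequality for Euler schemes: for a nonexpansive `J`
and `A = I - J`, any two Euler schemes `x_n = x_{n-1} - λ_n A(x_{n-1})` and
`x̂_n = x̂_{n-1} - λ̂_n A(x̂_{n-1})` with steps in `(0,1]` satisfy, for every `z`,
`‖x_k - x̂_l‖ ≤ ‖x₀ - z‖ + ‖x̂₀ - z‖ + ‖z - J z‖ √((σ_k - σ̂_l)² + τ_k + τ̂_l)`. -/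
theorem kobayashi_euler_inequality
    {X : Type*} [NormedAddCommGroup X] [NormedSpace ℝ X] [CompleteSpace X]
    (J : X → X) (hJ : ∀ x y : X, ‖J x - J y‖ ≤ ‖x - y‖)
    (lam lamh : ℕ → ℝ)
    (hlam : ∀ n : ℕ, 1 ≤ n → lam n ∈ Set.Ioc (0 : ℝ) 1)
    (hlamh : ∀ n : ℕ, 1 ≤ n → lamh n ∈ Set.Ioc (0 : ℝ) 1)
    (x xh : ℕ → X)
    (hx : ∀ n : ℕ, 1 ≤ n → x n = x (n - 1) - lam n • (x (n - 1) - J (x (n - 1))))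
    (hxh : ∀ n : ℕ, 1 ≤ n → xh n = xh (n - 1) - lamh n • (xh (n - 1) - J (xh (n - 1)))) :
    ∀ (z : X) (k l : ℕ),
      ‖x k - xh l‖ ≤ ‖x 0 - z‖ + ‖xh 0 - z‖ + ‖z - J z‖ *
        Real.sqrt (((∑ i ∈ Finset.Icc 1 k, lam i) - ∑ i ∈ Finset.Icc 1 l, lamh i) ^ 2
          + (∑ i ∈ Finset.Icc 1 k, (lam i) ^ 2) + ∑ i ∈ Finset.Icc 1 l, (lamh i) ^ 2) :=
  kobayashi_euler_inequality_general J hJ lam lamh hlam hlamh x xh hx hxh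
end

section
/- Let X be a real Banach space, J : X → X nonexpansive, A = I − J, and U : [0,∞) → X the differentiable solution of U'(t) = −A(U(t)) with U(0) = U_0. Fix t > 0, n ≥ 1, and steps λ_1, …, λ_n ∈ (0,1] with σ_n = Σ_{i=1}^n λ_i = t. Let x_0 = U_0 and x_k = x_{k−1} − λ_k A(x_{k−1}) for 1 ≤ k ≤ n, and let x̃ : [0,t] → X be the piecewise-linear interpolation with x̃(σ_k) = x_k for 0 ≤ k ≤ n (σ_0 = 0), i.e. x̃(t') = x_{k−1} + ((t' − σ_{k−1})/λ_k)(x_k − x_{k−1}) for t' ∈ [σ_{k−1}, σ_k]. Then for every t' ∈ [0,t], ‖x̃(t') − U(t')‖ ≤ ‖U_0 − J(U_0)‖ · (1 + (1 + √2) t) · √(max_{1 ≤ i ≤ n} λ_i). -/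
/-!
Kobayashi's inequality compares two Euler schemes `x` (steps `a_i`) and `y` (steps `b_j`)
started at the same point: `‖x_k - y_j‖ ≤ ‖x₀ - J x₀‖ √((σ_k - ρ_j)² + τ_k + τ'_j)`, where
`σ, ρ` are the partial sums of the steps and `τ, τ'` those of their squares. It follows by a
double induction from the identity, for `x' = x - l (x - J x)` and `y' = y - h (y - J y)`,
`(l + h - l h) (x' - y') = (1 - l) h (x - y') + (1 - h) l (x' - y) + l h (J x - J y)`
and Cauchy–Schwarz. The uniform scheme of step `h = s / m` stays within `O(h)` of `U` up to time
`s`, so letting `m → ∞` gives `‖x_k - U s‖ ≤ ‖U₀ - J U₀‖ √((σ_k - s)² + τ_k)`. At the two nodes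
enclosing `t'` this is at most `‖U₀ - J U₀‖ (1 + t) √(max λ_i)`, and `x̃(t')` is a convex
combination of the nodes.
-/

open Finset Set Filter Topology

section EulerScheme

variable {X : Type*} [NormedAddCommGroup X] [NormedSpace ℝ X]

def eulerStep (J : X → X) (h : ℝ) (x : X) : X := x - h • (x - J x)

variable {J : X → X}

lemma norm_eulerStep_sub_eulerStep_le (hJ : ∀ x y, ‖J x - J y‖ ≤ ‖x - y‖) {h : ℝ}
    (hh : h ∈ Icc (0 : ℝ) 1) (x y : X) :
    ‖eulerStep J h x - eulerStep J h y‖ ≤ ‖x - y‖ := by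
  have hid : eulerStep J h x - eulerStep J h y = (1 - h) • (x - y) + h • (J x - J y) := by
    simp only [eulerStep]; module
  calc ‖eulerStep J h x - eulerStep J h y‖ ≤ (1 - h) * ‖x - y‖ + h * ‖J x - J y‖ := by
        rw [hid]
        refine (norm_add_le _ _).trans_eq ?_
        rw [norm_smul_of_nonneg (by linarith [hh.2]), norm_smul_of_nonneg hh.1]
    _ ≤ ‖x - y‖ := by nlinarith [hJ x y, hh.1]

lemma norm_eulerStep_sub_apply_le (hJ : ∀ x y, ‖J x - J y‖ ≤ ‖x - y‖) {h : ℝ}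
    (hh : h ∈ Icc (0 : ℝ) 1) (x : X) :
    ‖eulerStep J h x - J (eulerStep J h x)‖ ≤ ‖x - J x‖ := by
  have hid : eulerStep J h x - J (eulerStep J h x)
      = (1 - h) • (x - J x) + (J x - J (eulerStep J h x)) := by
    simp only [eulerStep]; module
  have hstep : ‖x - eulerStep J h x‖ = h * ‖x - J x‖ := by
    simp only [eulerStep, sub_sub_cancel, norm_smul_of_nonneg hh.1]
  calc ‖eulerStep J h x - J (eulerStep J h x)‖ ≤ (1 - h) * ‖x - J x‖ + ‖x - eulerStep J h x‖ := by
        rw [hid, ← norm_smul_of_nonneg (by linarith [hh.2] : (0 : ℝ) ≤ 1 - h)]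
        exact (norm_add_le _ _).trans (by gcongr; exact hJ _ _)
    _ = ‖x - J x‖ := by rw [hstep]; ring

variable {x : ℕ → X} {a : ℕ → ℝ} {n : ℕ}

lemma norm_sub_apply_le_of_euler (hJ : ∀ x y, ‖J x - J y‖ ≤ ‖x - y‖)
    (ha : ∀ i < n, a i ∈ Icc (0 : ℝ) 1) (hx : ∀ k < n, x (k + 1) = eulerStep J (a k) (x k)) :
    ∀ k ≤ n, ‖x k - J (x k)‖ ≤ ‖x 0 - J (x 0)‖ := by
  intro k hk
  induction k with
  | zero => rfl
  | succ k ih =>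
    rw [hx k hk]
    exact (norm_eulerStep_sub_apply_le hJ (ha k hk) _).trans (ih (by omega))

lemma norm_sub_initial_le_of_euler (hJ : ∀ x y, ‖J x - J y‖ ≤ ‖x - y‖)
    (ha : ∀ i < n, a i ∈ Icc (0 : ℝ) 1) (hx : ∀ k < n, x (k + 1) = eulerStep J (a k) (x k)) :
    ∀ k ≤ n, ‖x k - x 0‖ ≤ (∑ i ∈ range k, a i) * ‖x 0 - J (x 0)‖ := by
  intro k hk
  induction k with
  | zero => simp
  | succ k ih =>
    have hid : x (k + 1) - x 0 = (x k - x 0) - a k • (x k - J (x k)) := by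
      rw [hx k hk, eulerStep]; abel
    calc ‖x (k + 1) - x 0‖ ≤ ‖x k - x 0‖ + a k * ‖x k - J (x k)‖ := by
          rw [hid, ← norm_smul_of_nonneg (ha k hk).1]; exact norm_sub_le _ _
      _ ≤ (∑ i ∈ range k, a i) * ‖x 0 - J (x 0)‖ + a k * ‖x 0 - J (x 0)‖ := by
          gcongr
          · exact ih (by omega)
          · exact (ha k hk).1
          · exact norm_sub_apply_le_of_euler hJ ha hx k (by omega)
      _ = (∑ i ∈ range (k + 1), a i) * ‖x 0 - J (x 0)‖ := by rw [sum_range_succ, add_mul]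

lemma weighted_sum_sqrt_le {w₁ w₂ w₃ F₁ F₂ F₃ F : ℝ} (hw₁ : 0 ≤ w₁) (hw₂ : 0 ≤ w₂) (hw₃ : 0 ≤ w₃)
    (hF₁ : 0 ≤ F₁) (hF₂ : 0 ≤ F₂) (hF₃ : 0 ≤ F₃)
    (hF : w₁ * F₁ + w₂ * F₂ + w₃ * F₃ ≤ (w₁ + w₂ + w₃) * F) :
    w₁ * √F₁ + w₂ * √F₂ + w₃ * √F₃ ≤ (w₁ + w₂ + w₃) * √F := by
  have cauchy_schwarz : (w₁ * √F₁ + w₂ * √F₂ + w₃ * √F₃) ^ 2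
      ≤ (w₁ + w₂ + w₃) * (w₁ * F₁ + w₂ * F₂ + w₃ * F₃) := by
    have key : ∀ s₁ s₂ s₃ : ℝ, (w₁ * s₁ + w₂ * s₂ + w₃ * s₃) ^ 2
        ≤ (w₁ + w₂ + w₃) * (w₁ * s₁ ^ 2 + w₂ * s₂ ^ 2 + w₃ * s₃ ^ 2) := fun s₁ s₂ s₃ => by
      nlinarith [mul_nonneg (mul_nonneg hw₁ hw₂) (sq_nonneg (s₁ - s₂)),
        mul_nonneg (mul_nonneg hw₁ hw₃) (sq_nonneg (s₁ - s₃)),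
        mul_nonneg (mul_nonneg hw₂ hw₃) (sq_nonneg (s₂ - s₃))]
    simpa only [Real.sq_sqrt hF₁, Real.sq_sqrt hF₂, Real.sq_sqrt hF₃] using key √F₁ √F₂ √F₃
  rw [← Real.sqrt_sq (by positivity : 0 ≤ w₁ + w₂ + w₃), ← Real.sqrt_mul (sq_nonneg _)]
  apply Real.le_sqrt_of_sq_le
  nlinarith

lemma eulerStep_sub_eulerStep_eq (J : X → X) (l h : ℝ) (x y : X) :
    (l + h - l * h) • (eulerStep J l x - eulerStep J h y)
      = ((1 - l) * h) • (x - eulerStep J h y) + ((1 - h) * l) • (eulerStep J l x - y)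
        + (l * h) • (J x - J y) := by
  simp only [eulerStep]; module

lemma le_mul_sqrt_sq_add (r M c : ℝ) (hM : 0 ≤ M) (hc : 0 ≤ c) : r * M ≤ M * √(r ^ 2 + c) := by
  rw [mul_comm]
  exact mul_le_mul_of_nonneg_left (Real.le_sqrt_of_sq_le (by linarith)) hM

lemma norm_euler_sub_euler_le (hJ : ∀ x y, ‖J x - J y‖ ≤ ‖x - y‖) {y : ℕ → X} {b : ℕ → ℝ} {m : ℕ}
    (ha : ∀ i < n, a i ∈ Ioc (0 : ℝ) 1) (hb : ∀ j < m, b j ∈ Icc (0 : ℝ) 1)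
    (hx : ∀ k < n, x (k + 1) = eulerStep J (a k) (x k))
    (hy : ∀ j < m, y (j + 1) = eulerStep J (b j) (y j)) (hxy : x 0 = y 0) :
    ∀ k ≤ n, ∀ j ≤ m, ‖x k - y j‖ ≤ ‖x 0 - J (x 0)‖ *
      √((∑ i ∈ range k, a i - ∑ i ∈ range j, b i) ^ 2
        + ∑ i ∈ range k, a i ^ 2 + ∑ i ∈ range j, b i ^ 2) := by
  have ha' : ∀ i < n, a i ∈ Icc (0 : ℝ) 1 := fun i hi => Ioc_subset_Icc_self (ha i hi)
  set M := ‖x 0 - J (x 0)‖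
  have hM : 0 ≤ M := norm_nonneg _
  intro k hk
  induction k with
  | zero =>
    intro j hj
    have hdisp := norm_sub_initial_le_of_euler hJ hb hy j hj
    rw [← hxy] at hdisp
    rw [norm_sub_rev]
    simpa using hdisp.trans
      (le_mul_sqrt_sq_add _ M (∑ i ∈ range j, b i ^ 2) hM (sum_nonneg fun _ _ => sq_nonneg _))
  | succ k ihk =>
    intro j hj
    induction j with
    | zero =>
      simpa [← hxy] using (norm_sub_initial_le_of_euler hJ ha' hx (k + 1) hk).trans
        (le_mul_sqrt_sq_add _ M (∑ i ∈ range (k + 1), a i ^ 2) hM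
          (sum_nonneg fun _ _ => sq_nonneg _))
    | succ j ihj =>
      obtain ⟨hl₀, hl₁⟩ := ha k hk
      obtain ⟨hh₀, hh₁⟩ := hb j hj
      have B₁ := ihk (by omega) (j + 1) hj
      have B₂ := ihj (by omega)
      have B₃ := ihk (by omega) j (by omega)
      simp only [sum_range_succ] at B₁ B₂ ⊢
      set l := a k
      set h := b j
      set S := ∑ i ∈ range k, a i
      set R := ∑ i ∈ range j, b i
      set T := ∑ i ∈ range k, a i ^ 2
      set Q := ∑ i ∈ range j, b i ^ 2
      have hT : 0 ≤ T := sum_nonneg fun _ _ => sq_nonneg _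
      have hQ : 0 ≤ Q := sum_nonneg fun _ _ => sq_nonneg _
      have hW : 0 < l + h - l * h := by nlinarith
      have hw₁ : 0 ≤ (1 - l) * h := by nlinarith
      have hw₂ : 0 ≤ (1 - h) * l := by nlinarith
      have hw₃ : 0 ≤ l * h := by positivity
      have hF : (1 - l) * h * ((S - (R + h)) ^ 2 + T + (Q + h ^ 2))
          + (1 - h) * l * ((S + l - R) ^ 2 + (T + l ^ 2) + Q) + l * h * ((S - R) ^ 2 + T + Q)
          ≤ ((1 - l) * h + (1 - h) * l + l * h)
            * ((S + l - (R + h)) ^ 2 + (T + l ^ 2) + (Q + h ^ 2)) := by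
        -- the two sides differ by `2 (l h)²`
        nlinarith [sq_nonneg (l * h)]
      rw [← mul_le_mul_iff_right₀ hW]
      calc (l + h - l * h) * ‖x (k + 1) - y (j + 1)‖
          = ‖((1 - l) * h) • (x k - y (j + 1)) + ((1 - h) * l) • (x (k + 1) - y j)
              + (l * h) • (J (x k) - J (y j))‖ := by
            rw [← norm_smul_of_nonneg hW.le, hx k hk, hy j hj, eulerStep_sub_eulerStep_eq]
        _ ≤ (1 - l) * h * ‖x k - y (j + 1)‖ + (1 - h) * l * ‖x (k + 1) - y j‖
              + l * h * ‖x k - y j‖ := by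
            refine norm_add₃_le.trans ?_
            rw [norm_smul_of_nonneg hw₁, norm_smul_of_nonneg hw₂, norm_smul_of_nonneg hw₃]
            gcongr
            exact hJ _ _
        _ ≤ (1 - l) * h * (M * √((S - (R + h)) ^ 2 + T + (Q + h ^ 2)))
              + (1 - h) * l * (M * √((S + l - R) ^ 2 + (T + l ^ 2) + Q))
              + l * h * (M * √((S - R) ^ 2 + T + Q)) := by gcongr
        _ = M * ((1 - l) * h * √((S - (R + h)) ^ 2 + T + (Q + h ^ 2))
              + (1 - h) * l * √((S + l - R) ^ 2 + (T + l ^ 2) + Q)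
              + l * h * √((S - R) ^ 2 + T + Q)) := by ring
        _ ≤ M * (((1 - l) * h + (1 - h) * l + l * h)
              * √((S + l - (R + h)) ^ 2 + (T + l ^ 2) + (Q + h ^ 2))) := by
            gcongr
            exact weighted_sum_sqrt_le hw₁ hw₂ hw₃ (by positivity) (by positivity)
              (by positivity) hF
        _ = (l + h - l * h) * (M * √((S + l - (R + h)) ^ 2 + (T + l ^ 2) + (Q + h ^ 2))) := by
            ring

variable {U : ℝ → X} {C : ℝ}

lemma norm_solution_sub_eulerStep_le (hJ : ∀ x y, ‖J x - J y‖ ≤ ‖x - y‖) {s h : ℝ} (hh : 0 ≤ h)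
    (hU : ∀ u ∈ Icc s (s + h), HasDerivAt U (J (U u) - U u) u)
    (hC : ∀ u ∈ Icc s (s + h), ‖J (U u) - U u‖ ≤ C) :
    ‖U (s + h) - eulerStep J h (U s)‖ ≤ 2 * C * h ^ 2 := by
  have hlip : ∀ u ∈ Icc s (s + h), ‖U u - U s‖ ≤ C * (u - s) :=
    norm_image_sub_le_of_norm_deriv_le_segment' (fun u hu => (hU u hu).hasDerivWithinAt)
      (fun u hu => hC u (Ico_subset_Icc_self hu))
  set w := J (U s) - U s
  have hderiv : ∀ u ∈ Icc s (s + h), HasDerivWithinAt (fun u => U u - (u - s) • w)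
      ((J (U u) - U u) - w) (Icc s (s + h)) u := fun u hu =>
    ((hU u hu).sub (((hasDerivAt_id u).sub_const s).smul_const w |>.congr_deriv
      (by simp))).hasDerivWithinAt
  have hbound : ∀ u ∈ Ico s (s + h), ‖(J (U u) - U u) - w‖ ≤ 2 * C * h := fun u hu => by
    have hu' := Ico_subset_Icc_self hu
    calc ‖(J (U u) - U u) - w‖ = ‖(J (U u) - J (U s)) - (U u - U s)‖ := by
          simp only [w]; congr 1; abel
      _ ≤ ‖J (U u) - J (U s)‖ + ‖U u - U s‖ := norm_sub_le _ _
      _ ≤ 2 * (C * (u - s)) := by linarith [hJ (U u) (U s), hlip u hu']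
      _ ≤ 2 * C * h := by nlinarith [hC s (left_mem_Icc.2 (by linarith)), norm_nonneg w, hu.2]
  have := norm_image_sub_le_of_norm_deriv_le_segment' hderiv hbound (s + h)
    (right_mem_Icc.2 (by linarith))
  simp only [sub_self, zero_smul, sub_zero, add_sub_cancel_left] at this
  calc ‖U (s + h) - eulerStep J h (U s)‖ = ‖U (s + h) - h • w - U s‖ := by
        simp only [eulerStep, w]; congr 1; module
    _ ≤ 2 * C * h * h := this
    _ = 2 * C * h ^ 2 := by ring

lemma norm_iterate_eulerStep_sub_solution_le (hJ : ∀ x y, ‖J x - J y‖ ≤ ‖x - y‖) {T h : ℝ}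
    (hh : h ∈ Icc (0 : ℝ) 1) (hU : ∀ u ∈ Icc 0 T, HasDerivAt U (J (U u) - U u) u)
    (hC : ∀ u ∈ Icc 0 T, ‖J (U u) - U u‖ ≤ C) :
    ∀ m : ℕ, m * h ≤ T → ‖(eulerStep J h)^[m] (U 0) - U (m * h)‖ ≤ m * (2 * C * h ^ 2) := by
  intro m hm
  induction m with
  | zero => simp
  | succ m ih =>
    push_cast at hm ⊢
    rw [add_one_mul] at hm ⊢
    have hmh : 0 ≤ m * h := mul_nonneg m.cast_nonneg hh.1
    have hsub : Icc (m * h) (m * h + h) ⊆ Icc 0 T := Icc_subset_Icc hmh (by linarith)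
    have hlocal := norm_solution_sub_eulerStep_le hJ hh.1 (fun u hu => hU u (hsub hu))
      (fun u hu => hC u (hsub hu))
    calc ‖(eulerStep J h)^[m + 1] (U 0) - U (m * h + h)‖
        ≤ ‖eulerStep J h ((eulerStep J h)^[m] (U 0)) - eulerStep J h (U (m * h))‖
          + ‖U (m * h + h) - eulerStep J h (U (m * h))‖ := by
          rw [Function.iterate_succ_apply', norm_sub_rev (U _)]
          exact norm_sub_le_norm_sub_add_norm_sub _ _ _
      _ ≤ m * (2 * C * h ^ 2) + 2 * C * h ^ 2 :=
          add_le_add ((norm_eulerStep_sub_eulerStep_le hJ hh _ _).trans (ih (by linarith [hh.1])))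
            hlocal
      _ = (m + 1) * (2 * C * h ^ 2) := by ring

lemma norm_euler_sub_solution_le (hJ : ∀ x y, ‖J x - J y‖ ≤ ‖x - y‖)
    (hU : ∀ s ≥ 0, HasDerivAt U (J (U s) - U s) s)
    (ha : ∀ i < n, a i ∈ Ioc (0 : ℝ) 1) (hx : ∀ k < n, x (k + 1) = eulerStep J (a k) (x k))
    (hxU : x 0 = U 0) {k : ℕ} (hk : k ≤ n) {s : ℝ} (hs : 0 ≤ s) :
    ‖x k - U s‖ ≤ ‖x 0 - J (x 0)‖ * √((∑ i ∈ range k, a i - s) ^ 2 + ∑ i ∈ range k, a i ^ 2) := by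
  have hJc : Continuous J := (LipschitzWith.of_dist_le_mul (K := 1) fun x y => by
    simpa [dist_eq_norm] using hJ x y).continuous
  obtain ⟨C, hC⟩ := isCompact_Icc.exists_bound_of_continuousOn (s := Icc 0 s)
    (f := fun u => J (U u) - U u) fun u hu =>
      have hUc := (hU u hu.1).continuousAt
      ((hJc.continuousAt.comp hUc).sub hUc).continuousWithinAt
  set M := ‖x 0 - J (x 0)‖
  set g : ℝ → ℝ := fun h => M * √((∑ i ∈ range k, a i - s) ^ 2 + ∑ i ∈ range k, a i ^ 2 + s * h)
    + 2 * C * s * h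
  have hg : Tendsto (fun m : ℕ => g (s / m)) atTop (𝓝 (g 0)) :=
    ((by fun_prop : Continuous g).tendsto 0).comp (tendsto_const_div_atTop_nhds_zero_nat s)
  have hg0 : g 0 = M * √((∑ i ∈ range k, a i - s) ^ 2 + ∑ i ∈ range k, a i ^ 2) := by simp [g]
  refine hg0 ▸ ge_of_tendsto hg (eventually_atTop.2 ⟨⌈s⌉₊ + 1, fun m hm => ?_⟩)
  have hm : (0 : ℝ) < m := by exact_mod_cast (show 0 < m by omega)
  have hsm : s ≤ m := (Nat.le_ceil s).trans (by exact_mod_cast (show ⌈s⌉₊ ≤ m by omega))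
  set h := s / m
  have hh : h ∈ Icc (0 : ℝ) 1 := ⟨by positivity, (div_le_one hm).2 hsm⟩
  have hmh : m * h = s := mul_div_cancel₀ s hm.ne'
  have hmh2 : m * h ^ 2 = s * h := by rw [← hmh]; ring
  have hdisc := norm_euler_sub_euler_le (y := fun j => (eulerStep J h)^[j] (U 0)) hJ ha
    (fun _ _ => hh) hx (fun j _ => Function.iterate_succ_apply' _ j _) hxU k hk m le_rfl
  have hglob := norm_iterate_eulerStep_sub_solution_le hJ hh (fun u hu => hU u hu.1)
    (fun u hu => hC u hu) m hmh.le
  simp only [sum_const, card_range, nsmul_eq_mul] at hdisc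
  rw [hmh, hmh2] at hdisc
  rw [hmh] at hglob
  calc ‖x k - U s‖ ≤ ‖x k - (eulerStep J h)^[m] (U 0)‖ + ‖(eulerStep J h)^[m] (U 0) - U s‖ :=
        norm_sub_le_norm_sub_add_norm_sub _ _ _
    _ ≤ g h := add_le_add hdisc (hglob.trans_eq (by linear_combination 2 * C * hmh2))

lemma norm_euler_sub_solution_le_of_abs_le (hJ : ∀ x y, ‖J x - J y‖ ≤ ‖x - y‖)
    (hU : ∀ s ≥ 0, HasDerivAt U (J (U s) - U s) s)
    (ha : ∀ i < n, a i ∈ Ioc (0 : ℝ) 1) (hx : ∀ k < n, x (k + 1) = eulerStep J (a k) (x k))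
    (hxU : x 0 = U 0) {Λ : ℝ} (haΛ : ∀ i < n, a i ≤ Λ) (hΛ : Λ ≤ 1)
    {k : ℕ} (hk : k ≤ n) {s : ℝ} (hs : 0 ≤ s) (hks : |∑ i ∈ range k, a i - s| ≤ Λ) :
    ‖x k - U s‖ ≤ ‖x 0 - J (x 0)‖ * (1 + ∑ i ∈ range n, a i) * √Λ := by
  have hΛ₀ : 0 ≤ Λ := (abs_nonneg _).trans hks
  have hak : ∀ i ∈ range n, 0 ≤ a i ∧ a i ≤ Λ := fun i hi =>
    ⟨(ha i (mem_range.1 hi)).1.le, haΛ i (mem_range.1 hi)⟩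
  have hσ : 0 ≤ ∑ i ∈ range k, a i :=
    sum_nonneg fun i hi => (hak i (range_subset_range.2 hk hi)).1
  have hσn : ∑ i ∈ range k, a i ≤ ∑ i ∈ range n, a i :=
    sum_le_sum_of_subset_of_nonneg (range_subset_range.2 hk) fun i hi _ => (hak i hi).1
  have hτ : ∑ i ∈ range k, a i ^ 2 ≤ Λ * ∑ i ∈ range k, a i := by
    rw [mul_sum]
    exact sum_le_sum fun i hi => by nlinarith [hak i (range_subset_range.2 hk hi)]
  have hsq : (∑ i ∈ range k, a i - s) ^ 2 ≤ Λ ^ 2 := sq_le_sq' (abs_le.1 hks).1 (abs_le.1 hks).2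
  refine (norm_euler_sub_solution_le hJ hU ha hx hxU hk hs).trans ?_
  rw [mul_assoc, ← Real.sqrt_sq (by linarith : 0 ≤ 1 + ∑ i ∈ range n, a i),
    ← Real.sqrt_mul (sq_nonneg _)]
  gcongr
  nlinarith [mul_le_mul_of_nonneg_left hΛ hΛ₀, mul_le_mul_of_nonneg_left hσn hΛ₀,
    mul_nonneg hΛ₀ (sq_nonneg (∑ i ∈ range n, a i)), mul_nonneg hΛ₀ hσ]

lemma norm_add_smul_sub_sub_le {p q c : X} {r θ : ℝ} (hp : ‖p - c‖ ≤ r) (hq : ‖q - c‖ ≤ r)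
    (hθ : θ ∈ Icc (0 : ℝ) 1) : ‖p + θ • (q - p) - c‖ ≤ r := by
  simpa [dist_eq_norm] using (convex_closedBall c r).add_smul_sub_mem
    (by simpa [dist_eq_norm] using hp) (by simpa [dist_eq_norm] using hq) hθ

lemma norm_interpolant_sub_solution_le (hJ : ∀ x y, ‖J x - J y‖ ≤ ‖x - y‖)
    (hU : ∀ s ≥ 0, HasDerivAt U (J (U s) - U s) s)
    (ha : ∀ i < n, a i ∈ Ioc (0 : ℝ) 1) (hx : ∀ k < n, x (k + 1) = eulerStep J (a k) (x k))
    (hxU : x 0 = U 0) {Λ : ℝ} (haΛ : ∀ i < n, a i ≤ Λ) (hΛ : Λ ≤ 1)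
    {k : ℕ} (hk : k < n) {s : ℝ} (hs : s ∈ Icc (∑ i ∈ range k, a i) (∑ i ∈ range (k + 1), a i)) :
    ‖x k + ((s - ∑ i ∈ range k, a i) / a k) • (x (k + 1) - x k) - U s‖
      ≤ ‖x 0 - J (x 0)‖ * (1 + ∑ i ∈ range n, a i) * √Λ := by
  rw [sum_range_succ] at hs
  have hσ : 0 ≤ ∑ i ∈ range k, a i := sum_nonneg fun i hi => (ha i ((mem_range.1 hi).trans hk)).1.le
  have hak : 0 < a k := (ha k hk).1
  have hakΛ : a k ≤ Λ := haΛ k hk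
  have hnode (j : ℕ) (hj : j ≤ n) (hjs : |∑ i ∈ range j, a i - s| ≤ Λ) :=
    norm_euler_sub_solution_le_of_abs_le hJ hU ha hx hxU haΛ hΛ hj (hσ.trans hs.1) hjs
  refine norm_add_smul_sub_sub_le (hnode k hk.le ?_) (hnode (k + 1) hk ?_)
    ⟨div_nonneg (by linarith [hs.1]) hak.le, (div_le_one hak).2 (by linarith [hs.2])⟩
  · rw [abs_le]; constructor <;> linarith [hs.1, hs.2]
  · rw [sum_range_succ, abs_le]; constructor <;> linarith [hs.1, hs.2]

lemma exists_lt_mem_Icc_of_le (σ : ℕ → ℝ) {n : ℕ} (hn : 1 ≤ n) {s : ℝ} (h₀ : σ 0 ≤ s)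
    (hs : s ≤ σ n) : ∃ k < n, s ∈ Icc (σ k) (σ (k + 1)) := by
  induction n, hn using Nat.le_induction with
  | base => exact ⟨0, one_pos, h₀, hs⟩
  | succ n hn ih =>
    by_cases hsn : σ n ≤ s
    · exact ⟨n, n.lt_succ_self, hsn, hs⟩
    · obtain ⟨k, hk, hks⟩ := ih (le_of_not_ge hsn)
      exact ⟨k, hk.trans n.lt_succ_self, hks⟩

lemma sum_Icc_one_eq_sum_range {M : Type*} [AddCommMonoid M] (f : ℕ → M) (k : ℕ) :
    ∑ i ∈ Finset.Icc 1 k, f i = ∑ i ∈ range k, f (i + 1) := by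
  rw [range_eq_Ico, sum_Ico_add' f 0 k 1, zero_add, Finset.Ico_add_one_right_eq_Icc]

end EulerScheme

theorem euler_interpolation_close_to_solution_general
    {X : Type*} [NormedAddCommGroup X] [NormedSpace ℝ X]
    (J : X → X) (hJ : ∀ x y : X, ‖J x - J y‖ ≤ ‖x - y‖)
    (U₀ : X) (U : ℝ → X)
    (hU : ∀ s ≥ (0 : ℝ), HasDerivAt U (J (U s) - U s) s)
    (hU0 : U 0 = U₀)
    (t : ℝ) (n : ℕ) (hn : 1 ≤ n)
    (lam : ℕ → ℝ)
    (hlam : ∀ i ∈ Finset.Icc 1 n, lam i ∈ Set.Ioc (0 : ℝ) 1)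
    (σ : ℕ → ℝ) (hσ : ∀ k : ℕ, σ k = ∑ i ∈ Finset.Icc 1 k, lam i)
    (hσn : σ n = t)
    (x : ℕ → X) (hx0 : x 0 = U₀)
    (hx : ∀ k ∈ Finset.Icc 1 n, x k = x (k - 1) - lam k • (x (k - 1) - J (x (k - 1))))
    (xt : ℝ → X)
    (hxt : ∀ k ∈ Finset.Icc 1 n, ∀ t' ∈ Set.Icc (σ (k - 1)) (σ k),
      xt t' = x (k - 1) + ((t' - σ (k - 1)) / lam k) • (x k - x (k - 1))) :
    ∀ t' ∈ Set.Icc (0 : ℝ) t,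
      ‖xt t' - U t'‖ ≤ ‖U₀ - J U₀‖ * (1 + (1 + Real.sqrt 2) * t) *
        Real.sqrt ((Finset.Icc 1 n).sup' (Finset.nonempty_Icc.mpr hn) lam) := by
  intro t' ht'
  set Λ := (Finset.Icc 1 n).sup' (Finset.nonempty_Icc.mpr hn) lam
  have hmem (i : ℕ) (hi : i < n) : i + 1 ∈ Finset.Icc 1 n := Finset.mem_Icc.2 ⟨by omega, hi⟩
  have hσ' (k : ℕ) : σ k = ∑ i ∈ range k, lam (i + 1) := (hσ k).trans (sum_Icc_one_eq_sum_range _ _)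
  obtain ⟨k, hk, hk'⟩ := exists_lt_mem_Icc_of_le σ hn (by simp [hσ, ht'.1]) (hσn ▸ ht'.2)
  rw [hxt (k + 1) (hmem k hk) t' (by simpa using hk'), Nat.add_sub_cancel]
  rw [hσ', hσ'] at hk'
  rw [hσ']
  refine (norm_interpolant_sub_solution_le (Λ := Λ) hJ hU (fun i hi => hlam _ (hmem i hi))
    (fun i hi => by simpa [eulerStep] using hx (i + 1) (hmem i hi)) (hx0.trans hU0.symm)
    (fun i hi => Finset.le_sup' lam (hmem i hi)) (Finset.sup'_le _ _ fun i hi => (hlam i hi).2)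
    hk hk').trans ?_
  rw [hx0, ← hσ', hσn]
  gcongr ‖U₀ - J U₀‖ * ?_ * _
  nlinarith [ht'.1.trans ht'.2, Real.sqrt_nonneg 2]

/-- comparison of a piecewise-linear interpolation of an Euler scheme
(with steps `λ_1,…,λ_n ∈ (0,1]` summing to `t` and initial point `U₀`) with the
continuous solution `U` of `U' = J(U) - U`, `U(0) = U₀`:
`‖x̃(t') - U(t')‖ ≤ ‖U₀ - J U₀‖ (1 + (1+√2) t) √(max_i λ_i)` for all `t' ∈ [0,t]`. -/
theorem euler_interpolation_close_to_solution
    {X : Type*} [NormedAddCommGroup X] [NormedSpace ℝ X] [CompleteSpace X]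
    (J : X → X) (hJ : ∀ x y : X, ‖J x - J y‖ ≤ ‖x - y‖)
    (U₀ : X) (U : ℝ → X)
    (hU : ∀ s ≥ (0 : ℝ), HasDerivAt U (J (U s) - U s) s)
    (hU0 : U 0 = U₀)
    (t : ℝ) (ht : 0 < t) (n : ℕ) (hn : 1 ≤ n)
    (lam : ℕ → ℝ)
    (hlam : ∀ i ∈ Finset.Icc 1 n, lam i ∈ Set.Ioc (0 : ℝ) 1)
    (σ : ℕ → ℝ) (hσ : ∀ k : ℕ, σ k = ∑ i ∈ Finset.Icc 1 k, lam i)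
    (hσn : σ n = t)
    (x : ℕ → X) (hx0 : x 0 = U₀)
    (hx : ∀ k ∈ Finset.Icc 1 n, x k = x (k - 1) - lam k • (x (k - 1) - J (x (k - 1))))
    (xt : ℝ → X)
    (hxt : ∀ k ∈ Finset.Icc 1 n, ∀ t' ∈ Set.Icc (σ (k - 1)) (σ k),
      xt t' = x (k - 1) + ((t' - σ (k - 1)) / lam k) • (x k - x (k - 1))) :
    ∀ t' ∈ Set.Icc (0 : ℝ) t,
      ‖xt t' - U t'‖ ≤ ‖U₀ - J U₀‖ * (1 + (1 + Real.sqrt 2) * t) *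
        Real.sqrt ((Finset.Icc 1 n).sup' (Finset.nonempty_Icc.mpr hn) lam) :=
  euler_interpolation_close_to_solution_general J hJ U₀ U hU hU0 t n hn lam hlam σ hσ hσn x hx0 hx
    xt hxt
end

section
/- Let X be a real Banach space, λ ∈ (0,1], and B : X → X a map that is (1−λ)-Lipschitz: ‖B(x) − B(y)‖ ≤ (1−λ)‖x − y‖ for all x,y. If f : [0,∞) → X is differentiable and satisfies f(t) + f'(t) = B(f(t)) for all t ≥ 0, then for every t ≥ 0, ‖f'(t)‖ ≤ ‖f'(0)‖ · e^{−λ t}. -/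
/-!
With `u = B ∘ f - f = f'`, the identity
`u (t + h) = (B (f (t + h)) - B (f t)) + u t - (f (t + h) - f t)` together with the Euler step
`f (t + h) = f t + h • u t + o(h)` gives `‖u (t + h)‖ ≤ (1 - λ h) ‖u t‖ + o(h)`. Hence the upper
right derivative of `‖u‖` is at most `-λ ‖u‖`, and Gronwall's inequality gives the decay.
-/

open Set Filter Real
open scoped Topology

theorem norm_apply_sub_le_of_euler_step {X : Type*} [NormedAddCommGroup X] [NormedSpace ℝ X]
    {B : X → X} {K : ℝ} (hK : 0 ≤ K) (hB : ∀ x y : X, ‖B x - B y‖ ≤ K * ‖x - y‖)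
    (x y : X) {h : ℝ} (hh : h ∈ Icc (0 : ℝ) 1) :
    ‖B y - y‖ ≤ (1 + (K - 1) * h) * ‖B x - x‖ + (1 + K) * ‖y - x - h • (B x - x)‖ := by
  set d := B x - x
  set r := y - x - h • d
  have hstep : ‖y - x‖ ≤ h * ‖d‖ + ‖r‖ := by
    calc ‖y - x‖ = ‖h • d + r‖ := by rw [add_sub_cancel]
      _ ≤ h * ‖d‖ + ‖r‖ := by
        grw [norm_add_le, norm_smul, Real.norm_of_nonneg hh.1]
  have hrest : ‖d - (y - x)‖ ≤ (1 - h) * ‖d‖ + ‖r‖ := by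
    calc ‖d - (y - x)‖ = ‖(1 - h) • d - r‖ := by congr 1; simp only [r]; module
      _ ≤ (1 - h) * ‖d‖ + ‖r‖ := by
        grw [norm_sub_le, norm_smul, Real.norm_of_nonneg (sub_nonneg.2 hh.2)]
  calc ‖B y - y‖ = ‖(B y - B x) + (d - (y - x))‖ := by congr 1; simp only [d]; abel
    _ ≤ K * ‖y - x‖ + ‖d - (y - x)‖ := by grw [norm_add_le, hB]
    _ ≤ K * (h * ‖d‖ + ‖r‖) + ((1 - h) * ‖d‖ + ‖r‖) := by grw [hstep, hrest]
    _ = _ := by ring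

theorem le_mul_exp_of_eventually_le_linear_right {g : ℝ → ℝ} {c a b : ℝ}
    (hg : ContinuousOn g (Icc a b))
    (hstep : ∀ x ∈ Ico a b, ∀ ε > 0, ∀ᶠ z in 𝓝[>] x, g z ≤ g x + (z - x) * (c * g x + ε))
    (hab : a ≤ b) :
    g b ≤ g a * exp (c * (b - a)) := by
  have hslope : ∀ x ∈ Ico a b, ∀ r, c * g x < r →
      ∃ᶠ z in 𝓝[>] x, (z - x)⁻¹ * (g z - g x) < r := by
    intro x hx r hr
    refine Eventually.frequently ?_
    filter_upwards [hstep x hx ((r - c * g x) / 2) (by linarith), self_mem_nhdsWithin]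
      with z hz (hxz : x < z)
    rw [inv_mul_lt_iff₀ (sub_pos.2 hxz)]
    nlinarith
  simpa only [gronwallBound_ε0] using le_gronwallBound_of_liminf_deriv_right_le hg hslope
    le_rfl (fun _ _ => (add_zero _).ge) b (right_mem_Icc.2 hab)

theorem eventually_norm_apply_sub_le_of_hasDerivAt {X : Type*} [NormedAddCommGroup X]
    [NormedSpace ℝ X] {B : X → X} {K : ℝ} (hK : 0 ≤ K)
    (hB : ∀ x y : X, ‖B x - B y‖ ≤ K * ‖x - y‖) {f : ℝ → X} {x : ℝ}
    (hf : HasDerivAt f (B (f x) - f x) x) {ε : ℝ} (hε : 0 < ε) :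
    ∀ᶠ z in 𝓝[>] x, ‖B (f z) - f z‖ ≤
      ‖B (f x) - f x‖ + (z - x) * ((K - 1) * ‖B (f x) - f x‖ + ε) := by
  have hK1 : 0 < 1 + K := by linarith
  have hlin : ∀ᶠ z in 𝓝 x,
      ‖f z - f x - (z - x) • (B (f x) - f x)‖ ≤ ε / (1 + K) * ‖z - x‖ :=
    hf.isLittleO.def (div_pos hε hK1)
  have hnear : ∀ᶠ z in 𝓝 x, z ≤ x + 1 := eventually_le_nhds (by linarith)
  filter_upwards [nhdsWithin_le_nhds hlin, nhdsWithin_le_nhds hnear, self_mem_nhdsWithin]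
    with z hz hz1 (hxz : x < z)
  rw [Real.norm_of_nonneg (sub_nonneg.2 hxz.le)] at hz
  calc ‖B (f z) - f z‖
      ≤ (1 + (K - 1) * (z - x)) * ‖B (f x) - f x‖
        + (1 + K) * ‖f z - f x - (z - x) • (B (f x) - f x)‖ :=
        norm_apply_sub_le_of_euler_step hK hB _ _ ⟨by linarith, by linarith⟩
    _ ≤ (1 + (K - 1) * (z - x)) * ‖B (f x) - f x‖ + (1 + K) * (ε / (1 + K) * (z - x)) := by
        grw [hz]
    _ = _ := by field_simp; ring

theorem norm_deriv_decay_of_contraction_general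
    {X : Type*} [NormedAddCommGroup X] [NormedSpace ℝ X]
    (lam : ℝ) (hlam : lam ∈ Set.Ioc (0 : ℝ) 1)
    (B : X → X) (hB : ∀ x y : X, ‖B x - B y‖ ≤ (1 - lam) * ‖x - y‖)
    (f : ℝ → X)
    (hf : ∀ t ≥ (0 : ℝ), HasDerivAt f (B (f t) - f t) t) :
    ∀ t ≥ (0 : ℝ), ‖B (f t) - f t‖ ≤ ‖B (f 0) - f 0‖ * Real.exp (-lam * t) := by
  intro t ht
  have hK : 0 ≤ 1 - lam := sub_nonneg.2 hlam.2
  have hBcont : Continuous B :=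
    (LipschitzWith.of_dist_le' fun x y => by simpa only [dist_eq_norm] using hB x y).continuous
  have hcont : ContinuousOn (fun s => ‖B (f s) - f s‖) (Icc 0 t) := fun s hs =>
    ((hBcont.continuousAt.comp (hf s hs.1).continuousAt).sub
      (hf s hs.1).continuousAt).norm.continuousWithinAt
  have hdecay := le_mul_exp_of_eventually_le_linear_right hcont
    (fun x hx ε hε => eventually_norm_apply_sub_le_of_hasDerivAt hK hB (hf x hx.1) hε) ht
  simpa only [sub_sub_cancel_left, sub_zero] using hdecay

/-- if `B` is `(1-λ)`-Lipschitz for some `λ ∈ (0,1]` and `f` solves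
`f(t) + f'(t) = B(f(t))`, i.e. `f'(t) = B(f(t)) - f(t)`, then
`‖f'(t)‖ ≤ ‖f'(0)‖ e^{-λ t}` for all `t ≥ 0`. -/
theorem norm_deriv_decay_of_contraction
    {X : Type*} [NormedAddCommGroup X] [NormedSpace ℝ X] [CompleteSpace X]
    (lam : ℝ) (hlam : lam ∈ Set.Ioc (0 : ℝ) 1)
    (B : X → X) (hB : ∀ x y : X, ‖B x - B y‖ ≤ (1 - lam) * ‖x - y‖)
    (f : ℝ → X)
    (hf : ∀ t ≥ (0 : ℝ), HasDerivAt f (B (f t) - f t) t) :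
    ∀ t ≥ (0 : ℝ), ‖B (f t) - f t‖ ≤ ‖B (f 0) - f 0‖ * Real.exp (-lam * t) :=
  norm_deriv_decay_of_contraction_general lam hlam B hB f hf
end

section
/- Let X be a real Banach space, J : X → X nonexpansive, λ ∈ (0,1], Φ(λ,x) = λ J(((1−λ)/λ) x), and let v_λ be the unique fixed point of Φ(λ,·). If u : [0,∞) → X is differentiable and satisfies u'(t) = Φ(λ, u(t)) − u(t) for all t ≥ 0, then u(t) → v_λ as t → ∞; indeed ‖u(t) − v_λ‖ ≤ ‖u'(0)‖ e^{−λ t}/λ for all t ≥ 0. -/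
/-!
Multiplying by `eᵗ` turns the equation `u' = F u - u` into `(eᵗ (u - v))' = eᵗ (F u - v)`.
If `F` contracts towards `v` with constant `1 - c`, Grönwall's inequality bounds `eᵗ ‖u t - v‖`
by `‖u 0 - v‖ e^{(1 - c) t}`, which is exponential decay at rate `c`; and the triangle inequality
through `F (u 0)` gives `c ‖u 0 - v‖ ≤ ‖F (u 0) - u 0‖`.
For `F = Φ(λ, ·)` one has `c = λ`, since `Φ(λ, ·)` is `λ · (1 - λ)/λ = (1 - λ)`-Lipschitz.
-/

open Filter Real Set

section ContractingFlow

variable {X : Type*} [NormedAddCommGroup X] {F : X → X} {v : X} {c : ℝ}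

theorem mul_norm_sub_le_norm_sub_self (hF : ∀ x, ‖F x - v‖ ≤ (1 - c) * ‖x - v‖) (x : X) :
    c * ‖x - v‖ ≤ ‖F x - x‖ := by
  have := norm_sub_le_norm_sub_add_norm_sub x (F x) v
  rw [norm_sub_rev x (F x)] at this
  linarith [hF x]

theorem tendsto_of_norm_sub_le_mul_exp {u : ℝ → X} {C : ℝ} (hc : 0 < c)
    (hu : ∀ t ≥ 0, ‖u t - v‖ ≤ C * exp (-c * t)) : Tendsto u atTop (nhds v) := by
  rw [tendsto_iff_norm_sub_tendsto_zero]
  have hexp : Tendsto (fun t => C * exp (-c * t)) atTop (nhds 0) := by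
    simpa using (tendsto_exp_neg_atTop_nhds_zero.comp (tendsto_id.const_mul_atTop hc)).const_mul C
  refine squeeze_zero' (Eventually.of_forall fun t => norm_nonneg _) ?_ hexp
  filter_upwards [eventually_ge_atTop 0] with t ht using hu t ht

variable [NormedSpace ℝ X]

theorem hasDerivAt_exp_smul_sub {u : ℝ → X} {t : ℝ} (hu : HasDerivAt u (F (u t) - u t) t) :
    HasDerivAt (fun s => exp s • (u s - v)) (exp t • (F (u t) - v)) t := by
  refine ((hasDerivAt_exp t).smul (hu.sub_const v)).congr_deriv ?_
  rw [← smul_add, sub_add_sub_cancel]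

theorem norm_sub_le_mul_exp_of_hasDerivAt (hF : ∀ x, ‖F x - v‖ ≤ (1 - c) * ‖x - v‖)
    {u : ℝ → X} (hu : ∀ t ≥ 0, HasDerivAt u (F (u t) - u t) t) {T : ℝ} (hT : 0 ≤ T) :
    ‖u T - v‖ ≤ ‖u 0 - v‖ * exp (-c * T) := by
  have hderiv t (ht : 0 ≤ t) := hasDerivAt_exp_smul_sub (v := v) (hu t ht)
  have hgronwall := norm_le_gronwallBound_of_norm_deriv_right_le
    (δ := ‖u 0 - v‖) (K := 1 - c) (ε := 0)
    (fun t ht => (hderiv t ht.1).continuousAt.continuousWithinAt)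
    (fun t ht => (hderiv t ht.1).hasDerivWithinAt) (by simp) ?_ T ⟨hT, le_rfl⟩
  · rw [gronwallBound_ε0, sub_zero, norm_smul, norm_of_nonneg (exp_pos T).le,
      show (1 - c) * T = T + -c * T by ring, exp_add, mul_left_comm] at hgronwall
    exact le_of_mul_le_mul_left hgronwall (exp_pos T)
  · intro t _
    rw [add_zero, norm_smul, norm_smul, norm_of_nonneg (exp_pos t).le, mul_left_comm]
    exact mul_le_mul_of_nonneg_left (hF _) (exp_pos t).le

theorem tendsto_and_norm_sub_le_of_hasDerivAt (hc : 0 < c)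
    (hF : ∀ x, ‖F x - v‖ ≤ (1 - c) * ‖x - v‖)
    {u : ℝ → X} (hu : ∀ t ≥ 0, HasDerivAt u (F (u t) - u t) t) :
    Tendsto u atTop (nhds v) ∧
      ∀ t ≥ 0, ‖u t - v‖ ≤ ‖F (u 0) - u 0‖ * exp (-c * t) / c := by
  have hbound t (ht : 0 ≤ t) : ‖u t - v‖ ≤ ‖F (u 0) - u 0‖ / c * exp (-c * t) :=
    (norm_sub_le_mul_exp_of_hasDerivAt hF hu ht).trans <|
      mul_le_mul_of_nonneg_right ((le_div_iff₀' hc).2 (mul_norm_sub_le_norm_sub_self hF _))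
        (exp_pos _).le
  refine ⟨tendsto_of_norm_sub_le_mul_exp hc hbound, fun t ht => ?_⟩
  rw [mul_div_right_comm]
  exact hbound t ht

end ContractingFlow

theorem norm_smul_comp_smul_sub_le {X : Type*} [NormedAddCommGroup X] [NormedSpace ℝ X]
    {J : X → X} (hJ : ∀ x y : X, ‖J x - J y‖ ≤ ‖x - y‖) {lam : ℝ} (hlam : lam ∈ Ioc 0 1)
    (x y : X) :
    ‖lam • J (((1 - lam) / lam) • x) - lam • J (((1 - lam) / lam) • y)‖ ≤
      (1 - lam) * ‖x - y‖ := by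
  obtain ⟨hpos, hle⟩ := hlam
  have ha : 0 ≤ (1 - lam) / lam := div_nonneg (sub_nonneg.2 hle) hpos.le
  calc ‖lam • J (((1 - lam) / lam) • x) - lam • J (((1 - lam) / lam) • y)‖
      ≤ lam * (((1 - lam) / lam) * ‖x - y‖) := by
        rw [← smul_sub, norm_smul, norm_of_nonneg hpos.le]
        refine mul_le_mul_of_nonneg_left ?_ hpos.le
        exact (hJ _ _).trans_eq (by rw [← smul_sub, norm_smul, norm_of_nonneg ha])
    _ = (1 - lam) * ‖x - y‖ := by field_simp

theorem solution_tendsto_discounted_fixed_point_general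
    {X : Type*} [NormedAddCommGroup X] [NormedSpace ℝ X]
    (J : X → X) (hJ : ∀ x y : X, ‖J x - J y‖ ≤ ‖x - y‖)
    (lam : ℝ) (hlam : lam ∈ Set.Ioc (0 : ℝ) 1)
    (vlam : X) (hvlam : lam • J (((1 - lam) / lam) • vlam) = vlam)
    (u : ℝ → X)
    (hu : ∀ t ≥ (0 : ℝ),
      HasDerivAt u (lam • J (((1 - lam) / lam) • u t) - u t) t) :
    Tendsto u atTop (nhds vlam) ∧
    ∀ t ≥ (0 : ℝ),
      ‖u t - vlam‖ ≤ ‖lam • J (((1 - lam) / lam) • u 0) - u 0‖ *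
        Real.exp (-lam * t) / lam := by
  have hΦ (x : X) : ‖lam • J (((1 - lam) / lam) • x) - vlam‖ ≤ (1 - lam) * ‖x - vlam‖ := by
    conv_lhs => rw [← hvlam]
    exact norm_smul_comp_smul_sub_le hJ hlam x vlam
  exact tendsto_and_norm_sub_le_of_hasDerivAt hlam.1 hΦ hu

/-- for a nonexpansive `J`, `λ ∈ (0,1]`, `Φ(λ,x) = λ J(((1-λ)/λ)x)`
with unique fixed point `v_λ`, any solution `u` of `u'(t) = Φ(λ,u(t)) - u(t)`
converges to `v_λ`, with `‖u(t) - v_λ‖ ≤ ‖u'(0)‖ e^{-λt}/λ`. -/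
theorem solution_tendsto_discounted_fixed_point
    {X : Type*} [NormedAddCommGroup X] [NormedSpace ℝ X] [CompleteSpace X]
    (J : X → X) (hJ : ∀ x y : X, ‖J x - J y‖ ≤ ‖x - y‖)
    (lam : ℝ) (hlam : lam ∈ Set.Ioc (0 : ℝ) 1)
    (vlam : X) (hvlam : lam • J (((1 - lam) / lam) • vlam) = vlam)
    (u : ℝ → X)
    (hu : ∀ t ≥ (0 : ℝ),
      HasDerivAt u (lam • J (((1 - lam) / lam) • u t) - u t) t) :
    Tendsto u atTop (nhds vlam) ∧
    ∀ t ≥ (0 : ℝ),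
      ‖u t - vlam‖ ≤ ‖lam • J (((1 - lam) / lam) • u 0) - u 0‖ *
        Real.exp (-lam * t) / lam :=
  solution_tendsto_discounted_fixed_point_general J hJ lam hlam vlam hvlam u hu
end

section
/- Let X be a real Banach space, J : X → X nonexpansive, Φ(λ,x) = λ J(((1−λ)/λ) x) for λ ∈ (0,1], and λ̄ : [0,∞) → (0,1] continuous with ∫_0^∞ λ̄(t) dt = +∞. If u, v : [0,∞) → X are differentiable and both satisfy w'(t) = Φ(λ̄(t), w(t)) − w(t), then ‖u(t) − v(t)‖ ≤ ‖u(0) − v(0)‖ · e^{−∫_0^t λ̄(s) ds} for all t ≥ 0; in particular ‖u(t) − v(t)‖ → 0 as t → ∞, so the asymptotic behavior of solutions does not depend on the initial value. -/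
/-!
Since `Φ(λ, ·)` is `(1 - λ)`-contracting, the difference `w = u - v` satisfies
`‖w' + w‖ ≤ (1 - λ̄) ‖w‖`, so `eᵗ w` has derivative of norm at most `(1 - λ̄) ‖eᵗ w‖`.
A Gronwall inequality with variable rate then gives `‖eᵗ w(t)‖ ≤ ‖w(0)‖ e^{t - ∫₀ᵗ λ̄}`,
and `∫₀^∞ λ̄ = ∞` turns this into decay.
-/

open Filter intervalIntegral Set Real Topology

theorem ContinuousOn.hasDerivWithinAt_integral_Ici {E : Type*} [NormedAddCommGroup E]
    [NormedSpace ℝ E] [CompleteSpace E] {K : ℝ → E} {a b x : ℝ}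
    (hK : ContinuousOn K (Icc a b)) (hx : x ∈ Ico a b) :
    HasDerivWithinAt (fun t => ∫ s in a..t, K s) (K x) (Ici x) x := by
  have hIcc : Icc a b ∈ 𝓝[>] x := Icc_mem_nhdsGT_of_mem hx
  exact integral_hasDerivWithinAt_right
    ((hK.mono (Icc_subset_Icc_right hx.2.le)).intervalIntegrable_of_Icc hx.1)
    ⟨Icc a b, hIcc, hK.aestronglyMeasurable measurableSet_Icc⟩
    ((hK x (Ico_subset_Icc_self hx)).mono_of_mem_nhdsWithin hIcc)

section Gronwall

variable {E : Type*} [NormedAddCommGroup E] [NormedSpace ℝ E]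
  {f f' : ℝ → E} {K : ℝ → ℝ} {a b : ℝ}

/-- `(‖f a‖ + δ) * exp (∫ₐᵗ (K + δ))` is a strict supersolution of `B' = K B`. -/
theorem norm_le_add_mul_exp_integral_of_norm_deriv_right_le (hab : a ≤ b)
    (hf : ContinuousOn f (Icc a b)) (hf' : ∀ x ∈ Ico a b, HasDerivWithinAt f (f' x) (Ici x) x)
    (hK : ContinuousOn K (Icc a b)) (bound : ∀ x ∈ Ico a b, ‖f' x‖ ≤ K x * ‖f x‖)
    {δ : ℝ} (hδ : 0 < δ) :
    ‖f b‖ ≤ (‖f a‖ + δ) * exp ((∫ x in a..b, K x) + δ * (b - a)) := by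
  set B : ℝ → ℝ := fun t => (‖f a‖ + δ) * exp ((∫ x in a..t, K x) + δ * (t - a))
  have hB_pos : ∀ t, 0 < B t := fun t => by positivity
  have hB_cont : ContinuousOn B (Icc a b) := by
    have := continuousOn_primitive_interval' (μ := MeasureTheory.volume)
      (hK.intervalIntegrable_of_Icc hab) (left_mem_uIcc (a := a) (b := b))
    rw [uIcc_of_le hab] at this
    fun_prop
  have hB_deriv : ∀ x ∈ Ico a b, HasDerivWithinAt B ((K x + δ) * B x) (Ici x) x := by
    intro x hx
    have hexponent : HasDerivWithinAt (fun t => (∫ s in a..t, K s) + δ * (t - a)) (K x + δ)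
        (Ici x) x :=
      ((hK.hasDerivWithinAt_integral_Ici hx).add
        (((hasDerivWithinAt_id x _).sub_const a).const_mul δ)).congr_deriv (by rw [mul_one])
    exact (hexponent.exp.const_mul (‖f a‖ + δ)).congr_deriv (by simp only [B]; ring)
  refine image_norm_le_of_norm_deriv_right_lt_deriv_boundary' hf hf' (B := B) ?_ hB_cont
    hB_deriv ?_ (right_mem_Icc.2 hab)
  · simp [B, hδ.le]
  · intro x hx hfx
    calc ‖f' x‖ ≤ K x * B x := hfx ▸ bound x hx
      _ < (K x + δ) * B x := by nlinarith [hB_pos x]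

theorem norm_le_mul_exp_integral_of_norm_deriv_right_le (hab : a ≤ b)
    (hf : ContinuousOn f (Icc a b)) (hf' : ∀ x ∈ Ico a b, HasDerivWithinAt f (f' x) (Ici x) x)
    (hK : ContinuousOn K (Icc a b)) (bound : ∀ x ∈ Ico a b, ‖f' x‖ ≤ K x * ‖f x‖) :
    ‖f b‖ ≤ ‖f a‖ * exp (∫ x in a..b, K x) := by
  have hlim : Tendsto (fun δ => (‖f a‖ + δ) * exp ((∫ x in a..b, K x) + δ * (b - a)))
      (𝓝[>] 0) (𝓝 (‖f a‖ * exp (∫ x in a..b, K x))) := by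
    have : Continuous fun δ => (‖f a‖ + δ) * exp ((∫ x in a..b, K x) + δ * (b - a)) := by
      fun_prop
    simpa using this.tendsto 0 |>.mono_left nhdsWithin_le_nhds
  exact ge_of_tendsto hlim <| eventually_nhdsWithin_of_forall fun δ hδ =>
    norm_le_add_mul_exp_integral_of_norm_deriv_right_le hab hf hf' hK bound hδ

end Gronwall

theorem hasDerivAt_exp_smul_of_hasDerivAt_sub_self_s13 {E : Type*} [NormedAddCommGroup E]
    [NormedSpace ℝ E] {w : ℝ → E} {g : E} {t : ℝ} (hw : HasDerivAt w (g - w t) t) :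
    HasDerivAt (fun s => exp s • w s) (exp t • g) t :=
  ((hasDerivAt_exp t).smul hw).congr_deriv (by rw [smul_sub, sub_add_cancel])

section Evolution

variable {X : Type*} [NormedAddCommGroup X] [NormedSpace ℝ X] {J : X → X}

noncomputable def Phi (J : X → X) (l : ℝ) (x : X) : X := l • J (((1 - l) / l) • x)

theorem norm_Phi_sub_le (hJ : ∀ x y : X, ‖J x - J y‖ ≤ ‖x - y‖) {l : ℝ} (hl : l ∈ Ioc 0 1)
    (x y : X) : ‖Phi J l x - Phi J l y‖ ≤ (1 - l) * ‖x - y‖ :=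
  calc ‖Phi J l x - Phi J l y‖ = l * ‖J (((1 - l) / l) • x) - J (((1 - l) / l) • y)‖ := by
        rw [Phi, Phi, ← smul_sub, norm_smul, Real.norm_of_nonneg hl.1.le]
    _ ≤ l * ‖((1 - l) / l) • x - ((1 - l) / l) • y‖ := mul_le_mul_of_nonneg_left (hJ _ _) hl.1.le
    _ = (1 - l) * ‖x - y‖ := by
        rw [← smul_sub, norm_smul, Real.norm_of_nonneg (div_nonneg (sub_nonneg.2 hl.2) hl.1.le),
          ← mul_assoc, mul_div_cancel₀ _ hl.1.ne']

variable {lamb : ℝ → ℝ} {u v : ℝ → X}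

theorem norm_sub_le_mul_exp_neg_integral (hJ : ∀ x y : X, ‖J x - J y‖ ≤ ‖x - y‖)
    (hlamb : ∀ t ≥ (0 : ℝ), lamb t ∈ Ioc 0 1) (hlambc : ContinuousOn lamb (Ici 0))
    (hu : ∀ t ≥ (0 : ℝ), HasDerivAt u (Phi J (lamb t) (u t) - u t) t)
    (hv : ∀ t ≥ (0 : ℝ), HasDerivAt v (Phi J (lamb t) (v t) - v t) t) {T : ℝ} (hT : 0 ≤ T) :
    ‖u T - v T‖ ≤ ‖u 0 - v 0‖ * exp (-∫ s in (0 : ℝ)..T, lamb s) := by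
  set y : ℝ → X := fun t => exp t • (u t - v t)
  have hy : ∀ t ≥ (0 : ℝ),
      HasDerivAt y (exp t • (Phi J (lamb t) (u t) - Phi J (lamb t) (v t))) t := fun t ht =>
    hasDerivAt_exp_smul_of_hasDerivAt_sub_self_s13 <|
      ((hu t ht).sub (hv t ht)).congr_deriv (sub_sub_sub_comm _ _ _ _)
  have hy_bound : ∀ t ≥ (0 : ℝ),
      ‖exp t • (Phi J (lamb t) (u t) - Phi J (lamb t) (v t))‖ ≤ (1 - lamb t) * ‖y t‖ := by
    intro t ht
    rw [norm_smul, norm_smul, mul_left_comm]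
    gcongr
    exact norm_Phi_sub_le hJ (hlamb t ht) _ _
  have hlambc_T : ContinuousOn lamb (Icc 0 T) := hlambc.mono Icc_subset_Ici_self
  have gronwall : ‖y T‖ ≤ ‖y 0‖ * exp (∫ s in (0 : ℝ)..T, (1 - lamb s)) :=
    norm_le_mul_exp_integral_of_norm_deriv_right_le hT
      (fun t ht => (hy t ht.1).continuousAt.continuousWithinAt)
      (fun t ht => (hy t ht.1).hasDerivWithinAt) (continuousOn_const.sub hlambc_T)
      (fun t ht => hy_bound t ht.1)
  have hnorm_y : ∀ t, ‖y t‖ = exp t * ‖u t - v t‖ := fun t => by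
    rw [norm_smul, Real.norm_of_nonneg (exp_pos t).le]
  have hintegral : ∫ s in (0 : ℝ)..T, (1 - lamb s) = T - ∫ s in (0 : ℝ)..T, lamb s := by
    rw [integral_sub intervalIntegrable_const (hlambc_T.intervalIntegrable_of_Icc hT)]
    simp
  refine le_of_mul_le_mul_left ?_ (exp_pos T)
  calc exp T * ‖u T - v T‖ = ‖y T‖ := (hnorm_y T).symm
    _ ≤ ‖y 0‖ * exp (∫ s in (0 : ℝ)..T, (1 - lamb s)) := gronwall
    _ = exp T * (‖u 0 - v 0‖ * exp (-∫ s in (0 : ℝ)..T, lamb s)) := by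
      rw [hnorm_y, hintegral, exp_zero, one_mul, exp_sub, exp_neg]
      ring

end Evolution

theorem asymptotic_independence_of_initial_value_general
    {X : Type*} [NormedAddCommGroup X] [NormedSpace ℝ X]
    (J : X → X) (hJ : ∀ x y : X, ‖J x - J y‖ ≤ ‖x - y‖)
    (lamb : ℝ → ℝ)
    (hlamb : ∀ t ≥ (0 : ℝ), lamb t ∈ Set.Ioc (0 : ℝ) 1)
    (hlambc : ContinuousOn lamb (Set.Ici (0 : ℝ)))
    (hdiv : Tendsto (fun t : ℝ => ∫ s in (0 : ℝ)..t, lamb s) atTop atTop)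
    (u v : ℝ → X)
    (hu : ∀ t ≥ (0 : ℝ),
      HasDerivAt u (lamb t • J (((1 - lamb t) / lamb t) • u t) - u t) t)
    (hv : ∀ t ≥ (0 : ℝ),
      HasDerivAt v (lamb t • J (((1 - lamb t) / lamb t) • v t) - v t) t) :
    (∀ t ≥ (0 : ℝ),
      ‖u t - v t‖ ≤ ‖u 0 - v 0‖ * Real.exp (-∫ s in (0 : ℝ)..t, lamb s)) ∧
    Tendsto (fun t : ℝ => ‖u t - v t‖) atTop (nhds 0) := by
  have hbound := fun t (ht : t ≥ 0) => norm_sub_le_mul_exp_neg_integral hJ hlamb hlambc hu hv ht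
  have hdecay :
      Tendsto (fun t => ‖u 0 - v 0‖ * exp (-∫ s in (0 : ℝ)..t, lamb s)) atTop (𝓝 0) := by
    simpa using
      (tendsto_exp_atBot.comp (tendsto_neg_atTop_atBot.comp hdiv)).const_mul ‖u 0 - v 0‖
  exact ⟨hbound, squeeze_zero' (.of_forall fun t => norm_nonneg _)
    (eventually_ge_atTop 0 |>.mono hbound) hdecay⟩

/-- for a nonexpansive `J`, `Φ(λ,x) = λ J(((1-λ)/λ)x)`, and a continuous
parametrization `λ̄ : [0,∞) → (0,1]` with `∫_0^∞ λ̄ = ∞`, any two solutions `u, v` of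
`w'(t) = Φ(λ̄(t),w(t)) - w(t)` satisfy
`‖u(t) - v(t)‖ ≤ ‖u(0) - v(0)‖ e^{-∫_0^t λ̄}` and `‖u(t) - v(t)‖ → 0`. -/
theorem asymptotic_independence_of_initial_value
    {X : Type*} [NormedAddCommGroup X] [NormedSpace ℝ X] [CompleteSpace X]
    (J : X → X) (hJ : ∀ x y : X, ‖J x - J y‖ ≤ ‖x - y‖)
    (lamb : ℝ → ℝ)
    (hlamb : ∀ t ≥ (0 : ℝ), lamb t ∈ Set.Ioc (0 : ℝ) 1)
    (hlambc : ContinuousOn lamb (Set.Ici (0 : ℝ)))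
    (hdiv : Tendsto (fun t : ℝ => ∫ s in (0 : ℝ)..t, lamb s) atTop atTop)
    (u v : ℝ → X)
    (hu : ∀ t ≥ (0 : ℝ),
      HasDerivAt u (lamb t • J (((1 - lamb t) / lamb t) • u t) - u t) t)
    (hv : ∀ t ≥ (0 : ℝ),
      HasDerivAt v (lamb t • J (((1 - lamb t) / lamb t) • v t) - v t) t) :
    (∀ t ≥ (0 : ℝ),
      ‖u t - v t‖ ≤ ‖u 0 - v 0‖ * Real.exp (-∫ s in (0 : ℝ)..t, lamb s)) ∧
    Tendsto (fun t : ℝ => ‖u t - v t‖) atTop (nhds 0) :=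
  asymptotic_independence_of_initial_value_general J hJ lamb hlamb hlambc hdiv u v hu hv
end

section
/- Let X be a real Banach space, J : X → X nonexpansive, and U : [0,∞) → X the differentiable solution of U'(t) = J(U(t)) − U(t) with U(0) = 0. Let v_n = J^n(0)/n, and for λ ∈ (0,1] let v_λ = λ V_λ where V_λ is the unique fixed point of x ↦ J((1−λ)x). If U'(t) converges to some l ∈ X as t → ∞, then v_n → l as n → ∞ and v_λ → l as λ → 0. -/
/-!
Since `U' = J ∘ U - U → l`, the mean value inequality gives `U t / t → l` and
`U (t + 1) - U t → l`, so `U` restricted to the integers is an asymptotic pseudo-orbit of `J`: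
`J (U n) - U (n + 1) → 0`. By nonexpansiveness these errors accumulate at most additively,
`‖Jⁿ 0 - U n‖ ≤ ∑ k < n, ‖J (U k) - U (k + 1)‖ = o(n)`, whence `Jⁿ 0 / n → l`.
For `v_λ`, accretivity of `I - J` compares `(1 - λ) V_λ`, a zero of `I + μ (I - J)` with
`μ = λ⁻¹ - 1`, to `U μ`; dividing by `μ` gives
`‖v_λ - U μ / μ‖ ≤ ‖U' μ - U μ / μ‖ → 0`.
-/

open Filter Topology Asymptotics Finset

section DerivTendsto

variable {E : Type*} [NormedAddCommGroup E] [NormedSpace ℝ E] {f f' : ℝ → E}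

theorem exists_forall_ge_norm_sub_le_of_tendsto_deriv_zero
    (hf : ∀ᶠ t in atTop, HasDerivAt f (f' t) t) (hf' : Tendsto f' atTop (𝓝 0))
    {ε : ℝ} (hε : 0 < ε) :
    ∃ T, ∀ x ≥ T, ∀ y ≥ T, ‖f y - f x‖ ≤ ε * ‖y - x‖ := by
  obtain ⟨T, hT⟩ := eventually_atTop.1
    (hf.and (hf'.eventually (Metric.closedBall_mem_nhds 0 hε)))
  refine ⟨T, fun x hx y hy => ?_⟩
  refine (convex_Ici T).norm_image_sub_le_of_norm_hasDerivWithin_le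
    (fun t ht => (hT t ht).1.hasDerivWithinAt) (fun t ht => ?_) hx hy
  simpa using (hT t ht).2

theorem isLittleO_one_sub_add_one_of_tendsto_deriv_zero
    (hf : ∀ᶠ t in atTop, HasDerivAt f (f' t) t) (hf' : Tendsto f' atTop (𝓝 0)) :
    (fun t => f (t + 1) - f t) =o[atTop] fun _ => (1 : ℝ) := by
  refine isLittleO_iff.2 fun c hc => ?_
  obtain ⟨T, hT⟩ := exists_forall_ge_norm_sub_le_of_tendsto_deriv_zero hf hf' hc
  filter_upwards [eventually_ge_atTop T] with t ht
  simpa using hT t ht (t + 1) (by linarith)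

theorem isLittleO_id_of_tendsto_deriv_zero
    (hf : ∀ᶠ t in atTop, HasDerivAt f (f' t) t) (hf' : Tendsto f' atTop (𝓝 0)) :
    f =o[atTop] id := by
  refine isLittleO_iff.2 fun c hc => ?_
  obtain ⟨T, hT⟩ := exists_forall_ge_norm_sub_le_of_tendsto_deriv_zero hf hf' (half_pos hc)
  set T₀ := max T 0
  filter_upwards [eventually_ge_atTop T₀, eventually_ge_atTop (‖f T₀‖ / (c / 2))]
    with t ht hft
  have hT₀ : 0 ≤ T₀ := le_max_right T 0
  have hfT₀ : ‖f T₀‖ ≤ c / 2 * t := (div_le_iff₀' (half_pos hc)).1 hft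
  calc ‖f t‖ ≤ ‖f T₀‖ + ‖f t - f T₀‖ := norm_le_norm_add_norm_sub' _ _
    _ ≤ c / 2 * t + c / 2 * ‖t - T₀‖ :=
      add_le_add hfT₀ (hT T₀ (le_max_left T 0) t ((le_max_left T 0).trans ht))
    _ ≤ c * ‖id t‖ := by
      rw [id, Real.norm_of_nonneg (sub_nonneg.2 ht), Real.norm_of_nonneg (hT₀.trans ht)]
      nlinarith

theorem eventually_hasDerivAt_sub_smul (hf : ∀ᶠ t in atTop, HasDerivAt f (f' t) t) (l : E) :
    ∀ᶠ t in atTop, HasDerivAt (fun s => f s - s • l) (f' t - l) t :=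
  hf.mono fun t ht => (ht.sub ((hasDerivAt_id' t).smul_const l)).congr_deriv (by rw [one_smul])

theorem tendsto_sub_add_one_of_tendsto_deriv {l : E}
    (hf : ∀ᶠ t in atTop, HasDerivAt f (f' t) t) (hf' : Tendsto f' atTop (𝓝 l)) :
    Tendsto (fun t => f (t + 1) - f t) atTop (𝓝 l) := by
  have hg := eventually_hasDerivAt_sub_smul hf l
  have := (isLittleO_one_iff ℝ).1
    (isLittleO_one_sub_add_one_of_tendsto_deriv_zero hg (tendsto_sub_nhds_zero_iff.2 hf'))
  refine tendsto_sub_nhds_zero_iff.1 (this.congr fun t => ?_)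
  simp only [add_smul, one_smul]
  abel

theorem tendsto_inv_smul_of_tendsto_deriv {l : E}
    (hf : ∀ᶠ t in atTop, HasDerivAt f (f' t) t) (hf' : Tendsto f' atTop (𝓝 l)) :
    Tendsto (fun t => t⁻¹ • f t) atTop (𝓝 l) := by
  have hg := eventually_hasDerivAt_sub_smul hf l
  have := (isLittleO_id_of_tendsto_deriv_zero hg
    (tendsto_sub_nhds_zero_iff.2 hf')).tendsto_inv_smul_nhds_zero
  refine tendsto_sub_nhds_zero_iff.1 (this.congr' ?_)
  filter_upwards [eventually_ne_atTop 0] with t ht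
  simp [smul_sub, smul_smul, inv_mul_cancel₀ ht]

end DerivTendsto

section Nonexpansive

variable {X : Type*} [NormedAddCommGroup X] {J : X → X}

theorem norm_iterate_sub_le_sum (hJ : ∀ x y : X, ‖J x - J y‖ ≤ ‖x - y‖)
    (u : ℕ → X) (n : ℕ) :
    ‖J^[n] (u 0) - u n‖ ≤ ∑ k ∈ range n, ‖J (u k) - u (k + 1)‖ := by
  induction n with
  | zero => simp
  | succ n ih =>
    rw [sum_range_succ, Function.iterate_succ_apply']
    calc ‖J (J^[n] (u 0)) - u (n + 1)‖
        ≤ ‖J (J^[n] (u 0)) - J (u n)‖ + ‖J (u n) - u (n + 1)‖ :=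
          norm_sub_le_norm_sub_add_norm_sub _ _ _
      _ ≤ _ := by gcongr; exact (hJ _ _).trans ih

theorem tendsto_inv_smul_iterate_of_pseudo_orbit [NormedSpace ℝ X]
    (hJ : ∀ x y : X, ‖J x - J y‖ ≤ ‖x - y‖) {u : ℕ → X} {l : X}
    (hu : Tendsto (fun n => J (u n) - u (n + 1)) atTop (𝓝 0))
    (hul : Tendsto (fun n : ℕ => (n : ℝ)⁻¹ • u n) atTop (𝓝 l)) :
    Tendsto (fun n : ℕ => (n : ℝ)⁻¹ • J^[n] (u 0)) atTop (𝓝 l) := by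
  have hsum := isLittleO_sum_range_of_tendsto_zero (tendsto_norm_zero.comp hu)
  have hdev : (fun n => J^[n] (u 0) - u n) =o[atTop] fun n => (n : ℝ) :=
    (isBigO_of_le _ fun n => (norm_iterate_sub_le_sum hJ u n).trans
      (Real.le_norm_self _)).trans_isLittleO hsum
  simpa [smul_sub] using hdev.tendsto_inv_smul_nhds_zero.add hul

theorem norm_sub_le_norm_add_smul_sub_sub [NormedSpace ℝ X]
    (hJ : ∀ x y : X, ‖J x - J y‖ ≤ ‖x - y‖) {μ : ℝ} (hμ : 0 ≤ μ) (x y : X) :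
    ‖x - y‖ ≤ ‖(x - y) + μ • ((x - J x) - (y - J y))‖ := by
  have key : (1 + μ) • (x - y)
      = ((x - y) + μ • ((x - J x) - (y - J y))) + μ • (J x - J y) := by
    module
  have := norm_add_le ((x - y) + μ • ((x - J x) - (y - J y))) (μ • (J x - J y))
  rw [← key, norm_smul, norm_smul, Real.norm_of_nonneg (by linarith),
    Real.norm_of_nonneg hμ] at this
  nlinarith [hJ x y]

theorem norm_smul_sub_le_of_fixedPoint [NormedSpace ℝ X]
    (hJ : ∀ x y : X, ‖J x - J y‖ ≤ ‖x - y‖) {lam : ℝ} (hlam : lam ∈ Set.Ioo 0 1)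
    {v : X} (hv : J ((1 - lam) • v) = v) (y : X) :
    ‖lam • v - (lam⁻¹ - 1)⁻¹ • y‖ ≤ ‖(J y - y) - (lam⁻¹ - 1)⁻¹ • y‖ := by
  obtain ⟨hlam0, hlam1⟩ := hlam
  set μ := lam⁻¹ - 1
  have hμ : 0 < μ := sub_pos.2 (one_lt_inv₀ hlam0 |>.2 hlam1)
  have hμlam : μ * lam = 1 - lam := by
    simp only [μ, sub_mul, inv_mul_cancel₀ hlam0.ne', one_mul]
  clear_value μ
  have hdiff : (1 - lam) • v - y = μ • (lam • v - μ⁻¹ • y) := by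
    rw [smul_sub, smul_inv_smul₀ hμ.ne', smul_smul, hμlam]
  have hres : ((1 - lam) • v - y) + μ • (((1 - lam) • v - J ((1 - lam) • v)) - (y - J y))
      = μ • ((J y - y) - μ⁻¹ • y) := by
    rw [hv, smul_sub μ (J y - y), smul_inv_smul₀ hμ.ne']
    match_scalars
    · linear_combination -hμlam
    all_goals ring
  have key := norm_sub_le_norm_add_smul_sub_sub hJ hμ.le ((1 - lam) • v) y
  rw [hres, hdiff, norm_smul, norm_smul] at key
  exact le_of_mul_le_mul_left key (norm_pos_iff.2 hμ.ne')

theorem tendsto_smul_fixedPoint_nhdsGT_zero [NormedSpace ℝ X]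
    (hJ : ∀ x y : X, ‖J x - J y‖ ≤ ‖x - y‖) {V y : ℝ → X} {l : X}
    (hV : ∀ lam ∈ Set.Ioo (0 : ℝ) 1, J ((1 - lam) • V lam) = V lam)
    (hy : Tendsto (fun t => J (y t) - y t) atTop (𝓝 l))
    (hyl : Tendsto (fun t => t⁻¹ • y t) atTop (𝓝 l)) :
    Tendsto (fun lam => lam • V lam) (𝓝[>] 0) (𝓝 l) := by
  have hμ : Tendsto (fun lam : ℝ => lam⁻¹ - 1) (𝓝[>] 0) atTop := by
    simpa only [sub_eq_add_neg] using tendsto_atTop_add_const_right _ (-1) tendsto_inv_nhdsGT_zero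
  have hdev : Tendsto (fun lam => lam • V lam - (lam⁻¹ - 1)⁻¹ • y (lam⁻¹ - 1))
      (𝓝[>] 0) (𝓝 0) := by
    refine squeeze_zero_norm' ?_ (by simpa using ((hy.sub hyl).comp hμ).norm)
    filter_upwards [Ioo_mem_nhdsGT one_pos] with lam hlam
    exact norm_smul_sub_le_of_fixedPoint hJ hlam (hV lam hlam) _
  simpa using hdev.add (hyl.comp hμ)

end Nonexpansive

theorem vn_and_vlambda_tendsto_of_deriv_tendsto_general
    {X : Type*} [NormedAddCommGroup X] [NormedSpace ℝ X]
    (J : X → X) (hJ : ∀ x y : X, ‖J x - J y‖ ≤ ‖x - y‖)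
    (U : ℝ → X)
    (hU : ∀ t ≥ (0 : ℝ), HasDerivAt U (J (U t) - U t) t)
    (hU0 : U 0 = 0)
    (V : ℝ → X)
    (hV : ∀ lam ∈ Set.Ioc (0 : ℝ) 1, J ((1 - lam) • V lam) = V lam)
    (l : X)
    (hl : Tendsto (fun t : ℝ => J (U t) - U t) atTop (nhds l)) :
    Tendsto (fun n : ℕ => (n : ℝ)⁻¹ • J^[n] 0) atTop (nhds l) ∧
    Tendsto (fun lam : ℝ => lam • V lam)
      (nhdsWithin 0 (Set.Ioc (0 : ℝ) 1)) (nhds l) := by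
  have hU' : ∀ᶠ t in atTop, HasDerivAt U (J (U t) - U t) t :=
    eventually_atTop.2 ⟨0, hU⟩
  have hUl := tendsto_inv_smul_of_tendsto_deriv hU' hl
  constructor
  · have hstep : Tendsto (fun t => J (U t) - U (t + 1)) atTop (𝓝 0) := by
      simpa using hl.sub (tendsto_sub_add_one_of_tendsto_deriv hU' hl)
    have := tendsto_inv_smul_iterate_of_pseudo_orbit hJ (u := fun n : ℕ => U n)
      (by simpa [Function.comp_def] using hstep.comp tendsto_natCast_atTop_atTop)
      (hUl.comp tendsto_natCast_atTop_atTop)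
    simpa [hU0] using this
  · have hV' lam (h : lam ∈ Set.Ioo (0 : ℝ) 1) := hV lam (Set.Ioo_subset_Ioc_self h)
    exact (tendsto_smul_fixedPoint_nhdsGT_zero hJ hV' hl hUl).mono_left
      (nhdsWithin_mono _ Set.Ioc_subset_Ioi_self)

/-- if `U` solves `U'(t) = J(U(t)) - U(t)` with `U(0) = 0` for a
nonexpansive `J`, and `U'(t) = J(U(t)) - U(t)` converges to `l` as `t → ∞`, then
`v_n = J^n(0)/n → l` and `v_λ = λ V_λ → l` as `λ → 0` (within `(0,1]`), where
`V_λ` is the unique fixed point of `x ↦ J((1-λ)x)`. -/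
theorem vn_and_vlambda_tendsto_of_deriv_tendsto
    {X : Type*} [NormedAddCommGroup X] [NormedSpace ℝ X] [CompleteSpace X]
    (J : X → X) (hJ : ∀ x y : X, ‖J x - J y‖ ≤ ‖x - y‖)
    (U : ℝ → X)
    (hU : ∀ t ≥ (0 : ℝ), HasDerivAt U (J (U t) - U t) t)
    (hU0 : U 0 = 0)
    (V : ℝ → X)
    (hV : ∀ lam ∈ Set.Ioc (0 : ℝ) 1, J ((1 - lam) • V lam) = V lam)
    (l : X)
    (hl : Tendsto (fun t : ℝ => J (U t) - U t) atTop (nhds l)) :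
    Tendsto (fun n : ℕ => (n : ℝ)⁻¹ • J^[n] 0) atTop (nhds l) ∧
    Tendsto (fun lam : ℝ => lam • V lam)
      (nhdsWithin 0 (Set.Ioc (0 : ℝ) 1)) (nhds l) :=
  vn_and_vlambda_tendsto_of_deriv_tendsto_general J hJ U hU hU0 V hV l hl
end

section
/- Let X be a real Banach space, J : X → X nonexpansive, and Φ(λ,x) = λ J(((1−λ)/λ) x) for λ ∈ (0,1], with v_λ the unique fixed point of Φ(λ,·). Assume hypothesis (H): there is a constant C ≥ 0 with ‖Φ(λ,x) − Φ(μ,x)‖ ≤ |λ − μ|(C + ‖x‖) for all x ∈ X and λ, μ ∈ (0,1]; let C' = sup_{λ ∈ (0,1]} ‖v_λ‖ (finite, bounded by ‖J(0)‖). Let λ̄ : [0,∞) → (0,1] be continuously differentiable and define L(t) = e^{∫_0^t ( |λ̄'(s)|/λ̄(s) − λ̄(s) ) ds}. If u : [0,∞) → X is differentiable and satisfies u'(t) = Φ(λ̄(t), u(t)) − u(t) for all t ≥ 0, then for every t ≥ 0, ‖u(t) − v_{λ̄(t)}‖ ≤ (L(t)/λ̄(t)) · ( ‖u'(0)‖ +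 (C + C') ∫_0^t |λ̄'(s)|/L(s) ds ). -/
/-!
Let `g t = ‖u' t‖ = ‖Φ(λ̄ t, u t) - u t‖`. As `Φ(λ, ·)` is a `(1 - λ)`-contraction fixing `v_λ`,
`λ̄ t ‖u t - v_{λ̄ t}‖ ≤ g t`, so it suffices to show `g t ≤ L t (g 0 + (C + C') ∫_0^t |λ̄'| / L)`.
Comparing `Φ(λ̄ z, u z)` with `Φ(λ̄ x, u x) = u x + u' x` through the contraction and (H), and
using `‖u‖ ≤ g / λ̄ + C'`, bounds the upper right Dini derivative of `g` (which need not be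
differentiable) by `(|λ̄'| / λ̄ - λ̄) g + (C + C') |λ̄'|`. Gronwall's argument with the integrating
factor `1 / L` goes through for Dini derivatives and integrates this inequality.
-/

open Set Filter Topology Function intervalIntegral

/-- `limsup_{z → x⁺} slope f x z ≤ a`, phrased without `limsup` to avoid boundedness conditions. -/
def DiniUpperRightLE (f : ℝ → ℝ) (x a : ℝ) : Prop :=
  ∀ r > a, ∀ᶠ z in 𝓝[>] x, slope f x z < r

namespace DiniUpperRightLE

variable {f g φ : ℝ → ℝ} {x a b φ' : ℝ}

theorem mono (h : DiniUpperRightLE f x a) (hab : a ≤ b) : DiniUpperRightLE f x b :=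
  fun r hr => h r (hab.trans_lt hr)

theorem of_eventually_le_of_tendsto {F : ℝ → ℝ} (hF : ∀ᶠ z in 𝓝[>] x, slope f x z ≤ F z)
    (hlim : Tendsto F (𝓝[>] x) (𝓝 a)) : DiniUpperRightLE f x a := fun r hr => by
  filter_upwards [hF, hlim.eventually_lt_const hr] with z h1 h2 using h1.trans_lt h2

theorem of_hasDerivWithinAt (hφ : HasDerivWithinAt φ φ' (Ioi x) x) : DiniUpperRightLE φ x φ' :=
  fun _ hr => hφ.limsup_slope_le' (lt_irrefl x) hr

theorem add (hf : DiniUpperRightLE f x a) (hg : DiniUpperRightLE g x b) :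
    DiniUpperRightLE (fun t => f t + g t) x (a + b) := fun r hr => by
  filter_upwards [hf (a + (r - a - b) / 2) (by linarith), hg (b + (r - a - b) / 2) (by linarith)]
    with z h1 h2
  have : slope (fun t => f t + g t) x z = slope f x z + slope g x z := by
    simp only [slope_def_field]; ring
  linarith

theorem mul_hasDerivWithinAt (h : DiniUpperRightLE f x a) (hφ : HasDerivWithinAt φ φ' (Ioi x) x)
    (hφx : 0 < φ x) : DiniUpperRightLE (fun t => φ t * f t) x (φ x * a + φ' * f x) := by
  intro r hr
  obtain ⟨r₁, har₁, hr₁⟩ : ∃ r₁, a < r₁ ∧ r₁ < (r - φ' * f x) / φ x :=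
    exists_between ((lt_div_iff₀ hφx).2 (by linarith))
  have hlim : Tendsto (fun z => φ z * r₁ + f x * slope φ x z) (𝓝[>] x)
      (𝓝 (φ x * r₁ + f x * φ')) :=
    (hφ.continuousWithinAt.tendsto.mul_const r₁).add
      (((hasDerivWithinAt_iff_tendsto_slope' (lt_irrefl x)).1 hφ).const_mul (f x))
  have hr' : φ x * r₁ + f x * φ' < r := by
    rw [lt_div_iff₀ hφx] at hr₁; linarith
  filter_upwards [h r₁ har₁, hlim.eventually_lt_const hr',
    hφ.continuousWithinAt.eventually (lt_mem_nhds hφx), self_mem_nhdsWithin]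
    with z h1 h2 (h3 : 0 < φ z) (hz : x < z)
  have : slope (fun t => φ t * f t) x z = φ z * slope f x z + f x * slope φ x z := by
    simp only [slope_def_field]; field_simp; ring
  rw [this]
  linarith [mul_lt_mul_of_pos_left h1 h3]

end DiniUpperRightLE

theorem ContinuousOn.le_left_of_diniUpperRightLE_zero {f : ℝ → ℝ} {a b : ℝ} (hab : a ≤ b)
    (hf : ContinuousOn f (Icc a b)) (hD : ∀ x ∈ Ico a b, DiniUpperRightLE f x 0) : f b ≤ f a :=
  image_le_of_liminf_slope_right_le_deriv_boundary hf (B := fun _ => f a) le_rfl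
    continuousOn_const (fun _ _ => hasDerivWithinAt_const _ _ _)
    (fun x hx r hr => (hD x hx r hr).frequently) (right_mem_Icc.2 hab)

theorem ContinuousOn.hasDerivWithinAt_integral_Ioi {f : ℝ → ℝ} {a b x : ℝ}
    (hf : ContinuousOn f (Icc a b)) (hx : x ∈ Ico a b) :
    HasDerivWithinAt (fun t => ∫ s in a..t, f s) (f x) (Ioi x) x := by
  have hmem : Icc a b ∈ 𝓝[>] x := Icc_mem_nhdsGT_of_mem hx
  exact (integral_hasDerivWithinAt_right (s := Ici x)
    ((hf.mono (Icc_subset_Icc_right hx.2.le)).intervalIntegrable_of_Icc hx.1)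
    ⟨_, hmem, hf.aestronglyMeasurable measurableSet_Icc⟩
    ((hf x (Ico_subset_Icc_self hx)).mono_of_mem_nhdsWithin hmem)).Ioi_of_Ici

theorem ContinuousOn.continuousOn_integral {f : ℝ → ℝ} {a b : ℝ} (hab : a ≤ b)
    (hf : ContinuousOn f (Icc a b)) : ContinuousOn (fun t => ∫ s in a..t, f s) (Icc a b) := by
  rw [← uIcc_of_le hab] at hf ⊢
  exact continuousOn_primitive_interval hf.integrableOn_uIcc

open Real in
theorem le_exp_integral_mul_of_diniUpperRightLE {g k p : ℝ → ℝ} {a b : ℝ} (hab : a ≤ b)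
    (hg : ContinuousOn g (Icc a b)) (hk : ContinuousOn k (Icc a b)) (hp : ContinuousOn p (Icc a b))
    (hD : ∀ x ∈ Ico a b, DiniUpperRightLE g x (k x * g x + p x)) :
    g b ≤ exp (∫ s in a..b, k s) * (g a + ∫ s in a..b, p s / exp (∫ r in a..s, k r)) := by
  set K := fun t => ∫ s in a..t, k s
  have hK := hk.continuousOn_integral hab
  have hq : ContinuousOn (fun s => p s / exp (K s)) (Icc a b) :=
    hp.div (continuous_exp.comp_continuousOn hK) fun _ _ => (exp_pos _).ne'
  set Q := fun t => ∫ s in a..t, p s / exp (K s)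
  have hG : exp (-K b) * g b + -Q b ≤ exp (-K a) * g a + -Q a := by
    refine ContinuousOn.le_left_of_diniUpperRightLE_zero (f := fun t => exp (-K t) * g t + -Q t)
      hab ((continuous_exp.comp_continuousOn hK.neg).mul hg |>.add
        (hq.continuousOn_integral hab).neg)
      fun x hx => ?_
    refine (((hD x hx).mul_hasDerivWithinAt (hk.hasDerivWithinAt_integral_Ioi hx).neg.exp
      (exp_pos _)).add (.of_hasDerivWithinAt (hq.hasDerivWithinAt_integral_Ioi hx).neg)).mono
      (le_of_eq ?_)
    simp only [Pi.neg_apply, exp_neg]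
    field_simp
    ring
  have hK0 : K a = 0 := integral_same
  have hQ0 : Q a = 0 := integral_same
  simp only [hK0, hQ0, neg_zero, exp_zero, one_mul, add_zero] at hG
  calc g b = exp (K b) * (exp (-K b) * g b) := by
        rw [← mul_assoc, ← exp_add, add_neg_cancel, exp_zero, one_mul]
    _ ≤ exp (K b) * (g a + Q b) := by gcongr; linarith

section Rescaled

variable {X : Type*} [NormedAddCommGroup X]

theorem mul_norm_sub_le_norm_sub_of_isFixedPt {f : X → X} {c : ℝ} {x y : X}
    (hf : ‖f x - f y‖ ≤ (1 - c) * ‖x - y‖) (hy : IsFixedPt f y) : c * ‖x - y‖ ≤ ‖f x - x‖ := by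
  rw [hy.eq] at hf
  linarith [norm_sub_le_norm_sub_add_norm_sub x (f x) y, norm_sub_rev x (f x)]

variable [NormedSpace ℝ X] {J : X → X}

theorem norm_sub_sub_norm_le_mul (w d : X) {h : ℝ} (h0 : 0 < h) (h1 : h ≤ 1) :
    ‖w - d‖ - ‖w‖ ≤ h * (‖h⁻¹ • d - w‖ - ‖w‖) := by
  have hwd : w - d = (1 - h) • w - h • (h⁻¹ • d - w) := by
    rw [smul_sub, smul_inv_smul₀ h0.ne', sub_smul, one_smul]; abel
  have := norm_sub_le ((1 - h) • w) (h • (h⁻¹ • d - w))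
  rw [← hwd, norm_smul, norm_smul, Real.norm_of_nonneg (sub_nonneg.2 h1),
    Real.norm_of_nonneg h0.le] at this
  linarith

/-- The map `Φ(λ, ·)`. -/
noncomputable def rescaledMap (J : X → X) (lam : ℝ) (x : X) : X := lam • J (((1 - lam) / lam) • x)

theorem norm_rescaledMap_sub_le (hJ : LipschitzWith 1 J) {lam : ℝ} (h0 : 0 < lam) (h1 : lam ≤ 1)
    (x y : X) : ‖rescaledMap J lam x - rescaledMap J lam y‖ ≤ (1 - lam) * ‖x - y‖ := by
  have hc : 0 ≤ (1 - lam) / lam := div_nonneg (sub_nonneg.2 h1) h0.le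
  calc ‖rescaledMap J lam x - rescaledMap J lam y‖
        = lam * ‖J (((1 - lam) / lam) • x) - J (((1 - lam) / lam) • y)‖ := by
          rw [rescaledMap, rescaledMap, ← smul_sub, norm_smul, Real.norm_of_nonneg h0.le]
    _ ≤ lam * ‖((1 - lam) / lam) • x - ((1 - lam) / lam) • y‖ := by
          gcongr; simpa using hJ.norm_sub_le (((1 - lam) / lam) • x) (((1 - lam) / lam) • y)
    _ = (1 - lam) * ‖x - y‖ := by
          rw [← smul_sub, norm_smul, Real.norm_of_nonneg hc]
          field_simp

theorem norm_le_of_isFixedPt_rescaledMap (hJ : LipschitzWith 1 J) {lam : ℝ} (h0 : 0 < lam)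
    (h1 : lam ≤ 1) {v : X} (hv : IsFixedPt (rescaledMap J lam) v) : ‖v‖ ≤ ‖J 0‖ := by
  have := mul_norm_sub_le_norm_sub_of_isFixedPt (norm_rescaledMap_sub_le hJ h0 h1 0 v) hv
  rw [zero_sub, norm_neg, rescaledMap, smul_zero, sub_zero, norm_smul,
    Real.norm_of_nonneg h0.le] at this
  exact le_of_mul_le_mul_left this h0

theorem ContinuousAt.rescaledMap (hJ : Continuous J) {lam : ℝ → ℝ} {u : ℝ → X} {t : ℝ}
    (hlam : ContinuousAt lam t) (ht : lam t ≠ 0) (hu : ContinuousAt u t) :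
    ContinuousAt (fun s => _root_.rescaledMap J (lam s) (u s)) t :=
  hlam.smul (hJ.continuousAt.comp (((continuousAt_const.sub hlam).div hlam ht).smul hu))

theorem norm_rescaledMap_sub_self_le (hJ : LipschitzWith 1 J) {C lam mu : ℝ} (h0 : 0 < mu)
    (h1 : mu ≤ 1) {x : X}
    (hH : ‖rescaledMap J mu x - rescaledMap J lam x‖ ≤ |mu - lam| * (C + ‖x‖)) (y : X) :
    ‖rescaledMap J mu y - y‖ ≤
      (1 - mu) * ‖y - x‖ + |mu - lam| * (C + ‖x‖) + ‖rescaledMap J lam x - y‖ := by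
  calc ‖rescaledMap J mu y - y‖
        ≤ ‖rescaledMap J mu y - rescaledMap J mu x‖ + ‖rescaledMap J mu x - rescaledMap J lam x‖
          + ‖rescaledMap J lam x - y‖ := by
          have := norm_sub_le_norm_sub_add_norm_sub (rescaledMap J mu y) (rescaledMap J lam x) y
          have := norm_sub_le_norm_sub_add_norm_sub (rescaledMap J mu y) (rescaledMap J mu x)
            (rescaledMap J lam x)
          linarith
    _ ≤ _ := by gcongr; exact norm_rescaledMap_sub_le hJ h0 h1 y x

theorem slope_norm_rescaledMap_sub_le (hJ : LipschitzWith 1 J) {C : ℝ} {lamb : ℝ → ℝ}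
    {u : ℝ → X} {x z : ℝ} (hz : lamb z ∈ Ioc 0 1)
    (hH : ‖rescaledMap J (lamb z) (u x) - rescaledMap J (lamb x) (u x)‖ ≤
      |lamb z - lamb x| * (C + ‖u x‖)) (hxz : x < z) (hzx : z ≤ x + 1) :
    slope (fun t => ‖rescaledMap J (lamb t) (u t) - u t‖) x z ≤
      (1 - lamb z) * ‖slope u x z‖ + |slope lamb x z| * (C + ‖u x‖) +
        (‖slope u x z - (rescaledMap J (lamb x) (u x) - u x)‖ -
          ‖rescaledMap J (lamb x) (u x) - u x‖) := by
  have h0 : 0 < z - x := sub_pos.2 hxz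
  have hu : ‖u z - u x‖ = (z - x) * ‖slope u x z‖ := by
    rw [slope_def_module, norm_smul, norm_inv, Real.norm_of_nonneg h0.le,
      mul_inv_cancel_left₀ h0.ne']
  have hl : |lamb z - lamb x| = (z - x) * |slope lamb x z| := by
    rw [slope_def_field, abs_div, abs_of_pos h0, mul_div_cancel₀ _ h0.ne']
  have hthree := norm_rescaledMap_sub_self_le hJ hz.1 hz.2 hH (u z)
  have hlast := norm_sub_sub_norm_le_mul (rescaledMap J (lamb x) (u x) - u x) (u z - u x) h0
    (by linarith)
  rw [sub_sub_sub_cancel_right, ← slope_def_module] at hlast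
  rw [hu, hl] at hthree
  rw [slope_def_field, div_le_iff₀ h0]
  linarith

theorem diniUpperRightLE_norm_rescaledMap_sub (hJ : LipschitzWith 1 J) {C : ℝ}
    (hH : ∀ (x : X), ∀ lam ∈ Ioc (0 : ℝ) 1, ∀ mu ∈ Ioc (0 : ℝ) 1,
      ‖rescaledMap J lam x - rescaledMap J mu x‖ ≤ |lam - mu| * (C + ‖x‖))
    {lamb : ℝ → ℝ} {u : ℝ → X} {x l' : ℝ} (hlamb : ∀ t ∈ Ici x, lamb t ∈ Ioc 0 1)
    (hl : HasDerivWithinAt lamb l' (Ioi x) x)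
    (hu : HasDerivWithinAt u (rescaledMap J (lamb x) (u x) - u x) (Ioi x) x) :
    DiniUpperRightLE (fun t => ‖rescaledMap J (lamb t) (u t) - u t‖) x
      (-lamb x * ‖rescaledMap J (lamb x) (u x) - u x‖ + |l'| * (C + ‖u x‖)) := by
  set w := rescaledMap J (lamb x) (u x) - u x
  have hsu := (hasDerivWithinAt_iff_tendsto_slope' (lt_irrefl x)).1 hu
  have hsl := (hasDerivWithinAt_iff_tendsto_slope' (lt_irrefl x)).1 hl
  have hlim := (((tendsto_const_nhds (x := (1 : ℝ))).sub hl.continuousWithinAt).mul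
    hsu.norm).add (hsl.abs.mul_const (C + ‖u x‖)) |>.add ((hsu.sub_const w).norm.sub_const ‖w‖)
  refine .of_eventually_le_of_tendsto ?_
    (by convert hlim using 2; simp only [sub_self, norm_zero]; ring)
  filter_upwards [Ioc_mem_nhdsGT (lt_add_one x)] with z hz
  have hlz := hlamb z (le_of_lt hz.1)
  exact slope_norm_rescaledMap_sub_le hJ hlz (hH _ _ hlz _ (hlamb x self_mem_Ici)) hz.1 hz.2

theorem diniUpperRightLE_norm_rescaledMap_sub_of_isFixedPt (hJ : LipschitzWith 1 J) {C C' : ℝ}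
    (hH : ∀ (x : X), ∀ lam ∈ Ioc (0 : ℝ) 1, ∀ mu ∈ Ioc (0 : ℝ) 1,
      ‖rescaledMap J lam x - rescaledMap J mu x‖ ≤ |lam - mu| * (C + ‖x‖))
    {lamb : ℝ → ℝ} {u : ℝ → X} {x l' : ℝ} {v : X} (hlamb : ∀ t ∈ Ici x, lamb t ∈ Ioc 0 1)
    (hl : HasDerivWithinAt lamb l' (Ioi x) x)
    (hu : HasDerivWithinAt u (rescaledMap J (lamb x) (u x) - u x) (Ioi x) x)
    (hv : IsFixedPt (rescaledMap J (lamb x)) v) (hvC' : ‖v‖ ≤ C') :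
    DiniUpperRightLE (fun t => ‖rescaledMap J (lamb t) (u t) - u t‖) x
      ((|l'| / lamb x - lamb x) * ‖rescaledMap J (lamb x) (u x) - u x‖ + (C + C') * |l'|) := by
  set g := ‖rescaledMap J (lamb x) (u x) - u x‖
  have hx := hlamb x self_mem_Ici
  have hfix :=
    mul_norm_sub_le_norm_sub_of_isFixedPt (norm_rescaledMap_sub_le hJ hx.1 hx.2 (u x) v) hv
  have hux : ‖u x‖ ≤ g / lamb x + C' :=
    (norm_le_norm_sub_add (u x) v).trans
      (add_le_add ((le_div_iff₀ hx.1).2 (by rw [mul_comm]; exact hfix)) hvC')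
  have := mul_le_mul_of_nonneg_left hux (abs_nonneg l')
  refine (diniUpperRightLE_norm_rescaledMap_sub hJ hH hlamb hl hu).mono ?_
  have : |l'| / lamb x * g = |l'| * (g / lamb x) := by ring
  linarith

end Rescaled

theorem slow_parametrization_inequality_general
    {X : Type*} [NormedAddCommGroup X] [NormedSpace ℝ X]
    (J : X → X) (hJ : ∀ x y : X, ‖J x - J y‖ ≤ ‖x - y‖)
    (v : ℝ → X)
    (hv : ∀ lam ∈ Set.Ioc (0 : ℝ) 1,
      lam • J (((1 - lam) / lam) • v lam) = v lam)
    (C : ℝ)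
    (hH : ∀ (x : X), ∀ lam ∈ Set.Ioc (0 : ℝ) 1, ∀ mu ∈ Set.Ioc (0 : ℝ) 1,
      ‖lam • J (((1 - lam) / lam) • x) - mu • J (((1 - mu) / mu) • x)‖ ≤
        |lam - mu| * (C + ‖x‖))
    (C' : ℝ) (hC' : C' = ⨆ lam : Set.Ioc (0 : ℝ) 1, ‖v (lam : ℝ)‖)
    (lamb lamb' : ℝ → ℝ)
    (hlamb : ∀ t ≥ (0 : ℝ), lamb t ∈ Set.Ioc (0 : ℝ) 1)
    (hlambd : ∀ t ≥ (0 : ℝ), HasDerivAt lamb (lamb' t) t)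
    (hlambd' : ContinuousOn lamb' (Set.Ici (0 : ℝ)))
    (L : ℝ → ℝ)
    (hL : ∀ t : ℝ, L t = Real.exp (∫ s in (0 : ℝ)..t, (|lamb' s| / lamb s - lamb s)))
    (u : ℝ → X)
    (hu : ∀ t ≥ (0 : ℝ),
      HasDerivAt u (lamb t • J (((1 - lamb t) / lamb t) • u t) - u t) t) :
    ∀ t ≥ (0 : ℝ),
      ‖u t - v (lamb t)‖ ≤ (L t / lamb t) *
        (‖lamb 0 • J (((1 - lamb 0) / lamb 0) • u 0) - u 0‖ +
          (C + C') * ∫ s in (0 : ℝ)..t, |lamb' s| / L s) := by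
  intro T hT
  have hJ' : LipschitzWith 1 J := .of_dist_le_mul fun x y => by simpa [dist_eq_norm] using hJ x y
  have hvC' : ∀ lam ∈ Ioc (0 : ℝ) 1, ‖v lam‖ ≤ C' := fun lam hlam => by
    rw [hC']
    refine le_ciSup (f := fun l : Ioc (0 : ℝ) 1 => ‖v l‖) ⟨‖J 0‖, ?_⟩ ⟨lam, hlam⟩
    rintro _ ⟨⟨l, hl⟩, rfl⟩
    exact norm_le_of_isFixedPt_rescaledMap hJ' hl.1 hl.2 (hv l hl)
  have hlc : ContinuousOn lamb (Icc 0 T) := fun t ht =>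
    (hlambd t ht.1).continuousAt.continuousWithinAt
  have hl'c : ContinuousOn lamb' (Icc 0 T) := hlambd'.mono Icc_subset_Ici_self
  have hgc : ContinuousOn (fun t => ‖rescaledMap J (lamb t) (u t) - u t‖) (Icc 0 T) :=
    fun t ht => ((ContinuousAt.rescaledMap hJ'.continuous (hlambd t ht.1).continuousAt
      (hlamb t ht.1).1.ne' (hu t ht.1).continuousAt).sub
        (hu t ht.1).continuousAt).norm.continuousWithinAt
  have hgron := le_exp_integral_mul_of_diniUpperRightLE hT hgc
    (k := fun s => |lamb' s| / lamb s - lamb s) (p := fun s => (C + C') * |lamb' s|)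
    ((hl'c.abs.div hlc fun t ht => (hlamb t ht.1).1.ne').sub hlc)
    (continuousOn_const.mul hl'c.abs)
    (fun x hx => diniUpperRightLE_norm_rescaledMap_sub_of_isFixedPt hJ' hH
      (fun t ht => hlamb t (hx.1.trans ht)) (hlambd x hx.1).hasDerivWithinAt
      (hu x hx.1).hasDerivWithinAt (hv _ (hlamb x hx.1)) (hvC' _ (hlamb x hx.1)))
  simp only [← hL, mul_div_assoc, integral_const_mul] at hgron
  rw [div_mul_eq_mul_div, le_div_iff₀ (hlamb T hT).1, mul_comm]
  exact (mul_norm_sub_le_norm_sub_of_isFixedPt (norm_rescaledMap_sub_le hJ' (hlamb T hT).1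
    (hlamb T hT).2 _ _) (hv _ (hlamb T hT))).trans hgron

/-- under hypothesis (H), for a C¹ parametrization `λ̄ : [0,∞) → (0,1]`
and `L(t) = e^{∫_0^t (|λ̄'|/λ̄ - λ̄)}`, any solution `u` of
`u'(t) = Φ(λ̄(t),u(t)) - u(t)` satisfies
`‖u(t) - v_{λ̄(t)}‖ ≤ (L(t)/λ̄(t)) (‖u'(0)‖ + (C + C') ∫_0^t |λ̄'(s)|/L(s) ds)`,
where `Φ(λ,x) = λ J(((1-λ)/λ)x)`, `v_λ` is its fixed point, and
`C' = sup_{λ ∈ (0,1]} ‖v_λ‖`. -/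
theorem slow_parametrization_inequality
    {X : Type*} [NormedAddCommGroup X] [NormedSpace ℝ X] [CompleteSpace X]
    (J : X → X) (hJ : ∀ x y : X, ‖J x - J y‖ ≤ ‖x - y‖)
    (v : ℝ → X)
    (hv : ∀ lam ∈ Set.Ioc (0 : ℝ) 1,
      lam • J (((1 - lam) / lam) • v lam) = v lam)
    (C : ℝ) (hC : 0 ≤ C)
    (hH : ∀ (x : X), ∀ lam ∈ Set.Ioc (0 : ℝ) 1, ∀ mu ∈ Set.Ioc (0 : ℝ) 1,
      ‖lam • J (((1 - lam) / lam) • x) - mu • J (((1 - mu) / mu) • x)‖ ≤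
        |lam - mu| * (C + ‖x‖))
    (C' : ℝ) (hC' : C' = ⨆ lam : Set.Ioc (0 : ℝ) 1, ‖v (lam : ℝ)‖)
    (lamb lamb' : ℝ → ℝ)
    (hlamb : ∀ t ≥ (0 : ℝ), lamb t ∈ Set.Ioc (0 : ℝ) 1)
    (hlambd : ∀ t ≥ (0 : ℝ), HasDerivAt lamb (lamb' t) t)
    (hlambd' : ContinuousOn lamb' (Set.Ici (0 : ℝ)))
    (L : ℝ → ℝ)
    (hL : ∀ t : ℝ, L t = Real.exp (∫ s in (0 : ℝ)..t, (|lamb' s| / lamb s - lamb s)))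
    (u : ℝ → X)
    (hu : ∀ t ≥ (0 : ℝ),
      HasDerivAt u (lamb t • J (((1 - lamb t) / lamb t) • u t) - u t) t) :
    ∀ t ≥ (0 : ℝ),
      ‖u t - v (lamb t)‖ ≤ (L t / lamb t) *
        (‖lamb 0 • J (((1 - lamb 0) / lamb 0) • u 0) - u 0‖ +
          (C + C') * ∫ s in (0 : ℝ)..t, |lamb' s| / L s) :=
  slow_parametrization_inequality_general J hJ v hv C hH C' hC' lamb lamb' hlamb hlambd hlambd' L hL
    u hu
end
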